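/- arXiv:2304.13771 — 6 statements merged into one kernel-verified Lean document; each statement's English description precedes it below -/
import Mathlib

section
/- For a self-adjoint operator $T$ on $\mathbb{C}^d$ and $k\in[d]$, the sum of the $k$ largest eigenvalues of $T$ equals the maximum of $\operatorname{tr}(TP)$ over all rank-$k$ orthogonal projectors $P$. -/
/-!
Conjugating by the eigenvector unitary of `T` turns `tr (T P)` into `∑ i, λᵢ qᵢ`, where the `qᵢ`
are the diagonal entries of another orthogonal projector `Q`. Since `Q` and `1 - Q` are positive
semidefinite, `0 ≤ qᵢ ≤ 1`, and `∑ i, qᵢ = tr Q = rank P = k`. A weighted sum of the eigenvalues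
with such weights is largest when the weight sits on the `k` largest eigenvalues, and the diagonal
projector onto their eigenvectors attains this value.
-/

open Finset
open scoped ComplexOrder

theorem Finset.sum_mul_le_sum_of_sum_eq_card {ι : Type*} [Fintype ι] (lam c : ι → ℝ)
    {t : Finset ι} (hc0 : ∀ i, 0 ≤ c i) (hc1 : ∀ i, c i ≤ 1) (hsum : ∑ i, c i = #t)
    (htop : ∀ i ∈ t, ∀ j ∉ t, lam j ≤ lam i) :
    ∑ i, lam i * c i ≤ ∑ i ∈ t, lam i := by
  classical
  obtain ⟨m, hmt, hmc⟩ : ∃ m, (∀ i ∈ t, m ≤ lam i) ∧ ∀ j ∉ t, lam j ≤ m := by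
    rcases t.eq_empty_or_nonempty with rfl | ht
    · obtain ⟨m, hm⟩ := (Set.finite_range lam).bddAbove
      exact ⟨m, by simp, fun j _ => hm ⟨j, rfl⟩⟩
    · obtain ⟨i₀, hi₀, hmin⟩ := t.exists_min_image lam ht
      exact ⟨lam i₀, hmin, fun j hj => htop i₀ hi₀ j hj⟩
  have hterm : ∀ i, (lam i - m) * (c i - if i ∈ t then 1 else 0) ≤ 0 := fun i => by
    split_ifs with hi
    · exact mul_nonpos_of_nonneg_of_nonpos (by linarith [hmt i hi]) (by linarith [hc1 i])
    · exact mul_nonpos_of_nonpos_of_nonneg (by linarith [hmc i hi]) (by linarith [hc0 i])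
  have hexpand : ∑ i, (lam i - m) * (c i - if i ∈ t then 1 else 0)
      = ∑ i, lam i * c i - ∑ i ∈ t, lam i := by
    simp only [mul_sub, sub_mul, mul_ite, mul_one, mul_zero, sum_sub_distrib, ← mul_sum, hsum,
      sum_ite_mem, univ_inter, sum_const, nsmul_eq_mul]
    ring
  linarith [sum_nonpos fun i (_ : i ∈ univ) => hterm i]

namespace Matrix

theorem trace_eq_rank_of_isIdempotentElem {n K : Type*} [Fintype n] [DecidableEq n] [Field K]
    {A : Matrix n n K} (hA : IsIdempotentElem A) : A.trace = A.rank := by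
  have hproj : IsIdempotentElem (toLin' A) := hA.map toLinAlgEquiv'
  rw [← trace_toLin'_eq, (LinearMap.IsIdempotentElem.isProj_range _ hproj).trace]
  rfl

section StarOrdered

variable {n R : Type*} [Fintype n] [CommRing R] [PartialOrder R] [StarRing R]
  [StarOrderedRing R] {Q : Matrix n n R}

theorem IsHermitian.diag_nonneg_of_isIdempotentElem (hQ : Q.IsHermitian)
    (hidem : IsIdempotentElem Q) (i : n) : 0 ≤ Q i i := by
  have hQ' : Q = Qᴴ * Q := by rw [hQ.eq, hidem.eq]
  rw [hQ']
  exact (posSemidef_conjTranspose_mul_self Q).diag_nonneg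

theorem IsHermitian.diag_le_one_of_isIdempotentElem [DecidableEq n] (hQ : Q.IsHermitian)
    (hidem : IsIdempotentElem Q) (i : n) : Q i i ≤ 1 := by
  simpa [sub_nonneg] using
    (isHermitian_one.sub hQ).diag_nonneg_of_isIdempotentElem hidem.one_sub i

end StarOrdered

section Spectral

variable {n 𝕜 : Type*} [Fintype n] [DecidableEq n] [RCLike 𝕜] {T : Matrix n n 𝕜}

theorem IsHermitian.trace_mul_conjStarAlgAut_eigenvectorUnitary (hT : T.IsHermitian)
    (X : Matrix n n 𝕜) :
    (T * Unitary.conjStarAlgAut 𝕜 _ hT.eigenvectorUnitary X).trace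
      = ∑ i, (hT.eigenvalues i : 𝕜) * X i i := by
  conv_lhs => enter [1, 1]; rw [hT.spectral_theorem]
  rw [← map_mul, trace_map']
  simp [Matrix.trace, diagonal_mul]

theorem IsHermitian.exists_trace_mul_eq_sum_eigenvalues (hT : T.IsHermitian) (t : Finset n) :
    ∃ P : Matrix n n 𝕜, P.IsHermitian ∧ IsIdempotentElem P ∧ P.rank = #t ∧
      (T * P).trace = ∑ i ∈ t, (hT.eigenvalues i : 𝕜) := by
  set E : Matrix n n 𝕜 := diagonal fun i => if i ∈ t then 1 else 0
  have hEH : E.IsHermitian := isHermitian_diagonal_iff.mpr fun i => by split_ifs <;> simp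
  have hEidem : IsIdempotentElem E := by simp [E, IsIdempotentElem, diagonal_mul_diagonal]
  set φ := Unitary.conjStarAlgAut 𝕜 _ hT.eigenvectorUnitary
  have hφEidem : IsIdempotentElem (φ E) := hEidem.map φ
  refine ⟨φ E, hEH.isSelfAdjoint.map φ, hφEidem, ?_, ?_⟩
  · have hrank : ((φ E).rank : 𝕜) = #t := by
      rw [← trace_eq_rank_of_isIdempotentElem hφEidem, trace_map']
      simp [E, Matrix.trace]
    exact_mod_cast hrank
  · rw [hT.trace_mul_conjStarAlgAut_eigenvectorUnitary]
    simp [E, sum_ite_mem]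

theorem IsHermitian.re_trace_mul_le_sum_eigenvalues (hT : T.IsHermitian) {t : Finset n}
    (htop : ∀ i ∈ t, ∀ j ∉ t, hT.eigenvalues j ≤ hT.eigenvalues i) {P : Matrix n n 𝕜}
    (hPH : P.IsHermitian) (hPidem : IsIdempotentElem P) (hPrank : P.rank = #t) :
    RCLike.re (T * P).trace ≤ ∑ i ∈ t, hT.eigenvalues i := by
  set φ := Unitary.conjStarAlgAut 𝕜 _ hT.eigenvectorUnitary
  set Q := φ.symm P
  have hQH : Q.IsHermitian := hPH.isSelfAdjoint.map φ.symm
  have hQidem : IsIdempotentElem Q := hPidem.map φ.symm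
  have hsum : ∑ i, RCLike.re (Q i i) = #t := by
    have htrace : Q.trace = #t := by
      rw [trace_map', trace_eq_rank_of_isIdempotentElem hPidem, hPrank]
    simpa [Matrix.trace] using congrArg RCLike.re htrace
  rw [← φ.apply_symm_apply P, hT.trace_mul_conjStarAlgAut_eigenvectorUnitary, map_sum]
  simp only [RCLike.re_ofReal_mul]
  refine sum_mul_le_sum_of_sum_eq_card _ _ (fun i => ?_) (fun i => ?_) hsum htop
  · simpa using (RCLike.le_iff_re_im.mp (hQH.diag_nonneg_of_isIdempotentElem hQidem i)).1
  · simpa using (RCLike.le_iff_re_im.mp (hQH.diag_le_one_of_isIdempotentElem hQidem i)).1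

end Spectral

end Matrix

theorem stmt1_general {d : ℕ} (T : Matrix (Fin d) (Fin d) ℂ) (hT : T.IsHermitian)
    (k : ℕ) (t : Finset (Fin d)) (ht : t.card = k)
    (htop : ∀ i ∈ t, ∀ j ∉ t, hT.eigenvalues j ≤ hT.eigenvalues i) :
    IsGreatest {x : ℝ | ∃ P : Matrix (Fin d) (Fin d) ℂ,
        P.IsHermitian ∧ P * P = P ∧ P.rank = k ∧ (T * P).trace = (x : ℂ)}
      (∑ i ∈ t, hT.eigenvalues i) := by
  subst ht
  refine ⟨?_, ?_⟩
  · obtain ⟨P, hPH, hPidem, hPrank, hPtrace⟩ := hT.exists_trace_mul_eq_sum_eigenvalues t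
    exact ⟨P, hPH, hPidem, hPrank, by rw [hPtrace]; push_cast; rfl⟩
  · rintro x ⟨P, hPH, hPidem, hPrank, hPx⟩
    simpa [hPx] using hT.re_trace_mul_le_sum_eigenvalues htop hPH hPidem hPrank

/-- Fan's maximum principle: the sum of the `k` largest eigenvalues of a Hermitian `T`
is the greatest value of `tr(T P)` over rank-`k` orthogonal projectors `P`. -/
theorem stmt1 {d : ℕ} (T : Matrix (Fin d) (Fin d) ℂ) (hT : T.IsHermitian)
    (k : ℕ) (hk1 : 1 ≤ k) (hk : k ≤ d)
    (t : Finset (Fin d)) (ht : t.card = k)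
    (htop : ∀ i ∈ t, ∀ j ∉ t, hT.eigenvalues j ≤ hT.eigenvalues i) :
    IsGreatest {x : ℝ | ∃ P : Matrix (Fin d) (Fin d) ℂ,
        P.IsHermitian ∧ P * P = P ∧ P.rank = k ∧ (T * P).trace = (x : ℂ)}
      (∑ i ∈ t, hT.eigenvalues i) :=
  stmt1_general T hT k t ht htop
end

section
/- Let $A,B$ be self-adjoint operators on a finite-dimensional Hilbert space $\mathcal{H}$ and $C$ a self-adjoint operator on $\mathcal{K}$. If $\lambda(A) \succeq \lambda(B)$, then $\lambda(C\otimes A) \succeq \lambda(C\otimes B)$. -/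
open Matrix Kronecker

/-- `Maj x y` : the real vector `x` majorizes `y`. -/
def Maj {ι : Type*} [Fintype ι] (x y : ι → ℝ) : Prop :=
  (∀ s : Finset ι, ∃ t : Finset ι, t.card = s.card ∧ ∑ i ∈ s, y i ≤ ∑ i ∈ t, x i) ∧
    ∑ i, x i = ∑ i, y i

/-!
The spectrum of `C ⊗ A` is the multiset of products `c_k a_i` of the eigenvalues of `C` and `A`.
Multiplying a majorization by a scalar preserves it (for a negative scalar, pass to complements
of index sets, which is where equality of the totals is used), majorization is stable under
direct sums, and it depends only on the multisets of entries.
-/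

open Finset

namespace Maj

variable {ι : Type*} [Fintype ι] {x y : ι → ℝ}

theorem smul_of_nonneg {c : ℝ} (hc : 0 ≤ c) (h : Maj x y) : Maj (c • x) (c • y) := by
  refine ⟨fun s => ?_, by simp only [Pi.smul_apply, smul_eq_mul, ← mul_sum, h.2]⟩
  obtain ⟨t, ht, hst⟩ := h.1 s
  refine ⟨t, ht, ?_⟩
  simp only [Pi.smul_apply, smul_eq_mul, ← mul_sum]
  exact mul_le_mul_of_nonneg_left hst hc

theorem neg (h : Maj x y) : Maj (-x) (-y) := by
  classical
  refine ⟨fun s => ?_, by simp only [Pi.neg_apply, sum_neg_distrib, h.2]⟩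
  obtain ⟨t, ht, hst⟩ := h.1 sᶜ
  refine ⟨tᶜ, by rw [card_compl, ht, card_compl, Nat.sub_sub_self (card_le_univ s)], ?_⟩
  have hy := sum_add_sum_compl s y
  have hx := sum_add_sum_compl t x
  simp only [Pi.neg_apply, sum_neg_distrib]
  linarith [h.2]

theorem smul (c : ℝ) (h : Maj x y) : Maj (c • x) (c • y) := by
  rcases le_total 0 c with hc | hc
  · exact h.smul_of_nonneg hc
  · simpa using (h.smul_of_nonneg (neg_nonneg.mpr hc)).neg

theorem comp_equiv {κ : Type*} [Fintype κ] (h : Maj x y) (σ τ : κ ≃ ι) :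
    Maj (x ∘ σ) (y ∘ τ) := by
  refine ⟨fun s => ?_, by simp only [Function.comp_apply, Equiv.sum_comp, h.2]⟩
  obtain ⟨t, ht, hst⟩ := h.1 (s.map τ.toEmbedding)
  refine ⟨t.map σ.symm.toEmbedding, by rw [card_map, ht, card_map], ?_⟩
  simpa [sum_map] using hst

theorem prod {κ : Type*} [Fintype κ] {X Y : κ → ι → ℝ} (h : ∀ k, Maj (X k) (Y k)) :
    Maj (fun p : κ × ι => X p.1 p.2) (fun p => Y p.1 p.2) := by
  classical
  refine ⟨fun s => ?_, by simp only [Fintype.sum_prod_type, fun k => (h k).2]⟩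
  let fiber (k : κ) : Finset ι := {i | (k, i) ∈ s}
  choose t ht hst using fun k => (h k).1 (fiber k)
  have hs : ∀ p : κ × ι, p ∈ s ↔ p.1 ∈ univ ∧ p.2 ∈ fiber p.1 := by simp [fiber]
  set T : Finset (κ × ι) := {p : κ × ι | p.2 ∈ t p.1}
  have hT : ∀ p : κ × ι, p ∈ T ↔ p.1 ∈ univ ∧ p.2 ∈ t p.1 := by simp [T]
  refine ⟨T, ?_, ?_⟩
  · rw [card_eq_sum_ones, card_eq_sum_ones, sum_finset_product _ _ fiber hs,
      sum_finset_product _ _ t hT]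
    simp only [← card_eq_sum_ones, ht]
  · rw [sum_finset_product' _ _ fiber hs, sum_finset_product' _ _ t hT]
    exact sum_le_sum fun k _ => hst k

end Maj

theorem exists_equiv_comp_eq_of_map_univ_val_eq {ι κ β : Type*} [Fintype ι] [Fintype κ]
    {f : ι → β} {g : κ → β} (h : univ.val.map f = univ.val.map g) :
    ∃ σ : ι ≃ κ, g ∘ σ = f := by
  classical
  have hfib : ∀ b, Fintype.card {i // f i = b} = Fintype.card {k // g k = b} := fun b => by
    have hcount := congrArg (Multiset.count b) h
    rw [Multiset.count_map, Multiset.count_map] at hcount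
    simp only [Fintype.card_subtype, @eq_comm _ _ b] at hcount ⊢
    exact hcount
  exact ⟨Equiv.ofFiberEquiv fun b => Fintype.equivOfCardEq (hfib b),
    funext (Equiv.ofFiberEquiv_map _)⟩

namespace Matrix.IsHermitian

open Polynomial

variable {𝕜 m n : Type*} [RCLike 𝕜] [Fintype m] [Fintype n] [DecidableEq m] [DecidableEq n]
  {A : Matrix m m 𝕜} {B : Matrix n n 𝕜}

theorem charpoly_kronecker (hA : A.IsHermitian) (hB : B.IsHermitian) :
    (A ⊗ₖ B).charpoly =
      ∏ p : m × n, (X - C ((hA.eigenvalues p.1 * hB.eigenvalues p.2 : ℝ) : 𝕜)) := by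
  conv_lhs => rw [hA.spectral_theorem, hB.spectral_theorem]
  simp only [Unitary.conjStarAlgAut_apply]
  rw [mul_kronecker_mul, mul_kronecker_mul, charpoly_mul_comm, ← mul_assoc,
    ← mul_kronecker_mul]
  simp [charpoly_diagonal, diagonal_kronecker_diagonal]

theorem exists_equiv_eigenvalues_kronecker (hA : A.IsHermitian) (hB : B.IsHermitian)
    (hAB : (A ⊗ₖ B).IsHermitian) :
    ∃ σ : m × n ≃ m × n,
      hAB.eigenvalues ∘ σ = fun p => hA.eigenvalues p.1 * hB.eigenvalues p.2 := by
  refine exists_equiv_comp_eq_of_map_univ_val_eq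
    (Multiset.map_injective (RCLike.ofReal_injective (K := 𝕜)) ?_)
  rw [Multiset.map_map, Multiset.map_map, ← hAB.roots_charpoly_eq_eigenvalues,
    charpoly_kronecker hA hB, roots_prod _ _ (prod_ne_zero_iff.mpr fun p _ => X_sub_C_ne_zero _)]
  simp only [roots_X_sub_C, Multiset.bind_singleton, Function.comp_def]

end Matrix.IsHermitian

/-- If `λ(A) ⪰ λ(B)` then `λ(C ⊗ A) ⪰ λ(C ⊗ B)` for self-adjoint `A, B, C`. -/
theorem stmt3 {dK dH : ℕ} (C : Matrix (Fin dK) (Fin dK) ℂ)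
    (A B : Matrix (Fin dH) (Fin dH) ℂ)
    (hC : C.IsHermitian) (hA : A.IsHermitian) (hB : B.IsHermitian)
    (hCA : (C ⊗ₖ A).IsHermitian) (hCB : (C ⊗ₖ B).IsHermitian)
    (h : Maj hA.eigenvalues hB.eigenvalues) :
    Maj hCA.eigenvalues hCB.eigenvalues := by
  obtain ⟨σ, hσ⟩ := hC.exists_equiv_eigenvalues_kronecker hA hCA
  obtain ⟨τ, hτ⟩ := hC.exists_equiv_eigenvalues_kronecker hB hCB
  have hprod := Maj.prod fun k => h.smul (hC.eigenvalues k)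
  simpa [← hσ, ← hτ, Function.comp_assoc] using hprod.comp_equiv σ.symm τ.symm
end

section
/- For any state $Q$ on $\mathbb{C}^d$ with maximal eigenvector $|q_1\rangle$, any probability measure $\mu$ on subsets of $[n]$, and any tuple of states $(\rho_I)_{I\subseteq[n]}$ where $\rho_I$ acts on the qudits in $I$, the largest eigenvalue satisfies $\lambda_1\big(\sum_{I\subseteq[n]}\mu_I\, \rho_I\otimes Q^{\otimes I^c}\big) \le \lambda_1\big(\sum_{I\subseteq[n]}\mu_I\, |q_1\rangle\langle q_1|^{\otimes I}\otimes Q^{\otimes I^c}\big)$. -/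
/-!
Let `r` be the largest eigenvalue of `Q`. In the Loewner order each summand `ρ_I ⊗ Q^{⊗Iᶜ}`
lies below `r^{|Iᶜ|} • 1`: a state satisfies `0 ≤ ρ_I ≤ 1`, and diagonalising `Q` factor by
factor gives `0 ≤ Q^{⊗Iᶜ} ≤ r^{|Iᶜ|} • 1`. Hence every eigenvalue of the left-hand operator is at
most `∑_I μ_I r^{|Iᶜ|}`, which is exactly the expectation of the right-hand operator in the
product state `q₁^{⊗n}`, hence at most its largest eigenvalue.
-/

open Matrix
open scoped ComplexOrder MatrixOrder Kronecker

namespace Matrix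

variable {ι m n p R 𝕜 : Type*} [Fintype ι]

def piKronecker [CommMonoid R] (A : ι → Matrix m n R) : Matrix (ι → m) (ι → n) R :=
  of fun x y => ∏ i, A i (x i) (y i)

section CommSemiring

variable [CommSemiring R]

theorem piKronecker_mul [DecidableEq ι] [Fintype n] (A : ι → Matrix m n R)
    (B : ι → Matrix n p R) : piKronecker A * piKronecker B = piKronecker fun i => A i * B i := by
  ext x z
  simp only [piKronecker, mul_apply, of_apply, Finset.prod_univ_sum, Fintype.piFinset_univ,
    Finset.prod_mul_distrib]

theorem piKronecker_one [DecidableEq m] : piKronecker (fun _ : ι => (1 : Matrix m m R)) = 1 := by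
  ext x y
  simp [piKronecker, one_apply, Finset.prod_boole, funext_iff]

theorem piKronecker_diagonal [DecidableEq m] (d : ι → m → R) :
    piKronecker (fun i => diagonal (d i)) = diagonal fun x => ∏ i, d i (x i) := by
  ext x y
  simp [piKronecker, diagonal_apply, Finset.prod_ite_zero, funext_iff]

end CommSemiring

theorem star_dotProduct_piKronecker_mulVec [CommSemiring R] [StarRing R] [DecidableEq ι]
    [Fintype m] [Fintype n] (u : ι → m → R) (A : ι → Matrix m n R) (v : ι → n → R) :
    star (fun x => ∏ i, u i (x i)) ⬝ᵥ (piKronecker A *ᵥ fun y => ∏ i, v i (y i)) =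
      ∏ i, star (u i) ⬝ᵥ (A i *ᵥ v i) := by
  have hstar : star (fun x : ι → m => ∏ i, u i (x i)) = fun x => ∏ i, star (u i) (x i) :=
    funext fun x => star_prod _ _
  rw [hstar]
  simp only [dotProduct, mulVec, piKronecker, of_apply, Finset.mul_sum, Fintype.prod_sum,
    ← Finset.prod_mul_distrib]

theorem conjTranspose_piKronecker [CommMonoid R] [StarMul R] (A : ι → Matrix m n R) :
    (piKronecker A)ᴴ = piKronecker fun i => (A i)ᴴ := by
  ext x y
  simp [piKronecker, conjTranspose_apply, star_prod]

theorem piKronecker_mul_conjTranspose_eq_one [CommSemiring R] [StarRing R] [DecidableEq ι]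
    [Fintype m] [DecidableEq m] {U : ι → Matrix m m R} (hU : ∀ i, U i * (U i)ᴴ = 1) :
    piKronecker U * (piKronecker U)ᴴ = 1 := by
  simp only [conjTranspose_piKronecker, piKronecker_mul, hU, piKronecker_one]

section Loewner

variable [RCLike 𝕜]

theorem IsHermitian.le_algebraMap_iff_eigenvalues_le [Fintype m] [DecidableEq m]
    {A : Matrix m m 𝕜} (hA : A.IsHermitian) (c : ℝ) :
    A ≤ algebraMap ℝ _ c ↔ ∀ i, hA.eigenvalues i ≤ c := by
  rw [le_algebraMap_iff_spectrum_le hA.isSelfAdjoint, hA.spectrum_real_eq_range_eigenvalues]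
  simp

theorem IsHermitian.le_algebraMap_of_eigenvalue_le [Fintype m] [DecidableEq m]
    {A : Matrix m m 𝕜} (hA : A.IsHermitian) {c : ℝ}
    (h : ∀ (v : m → 𝕜) (s : ℝ), A *ᵥ v = (s : 𝕜) • v → v ≠ 0 → s ≤ c) :
    A ≤ algebraMap ℝ _ c :=
  (hA.le_algebraMap_iff_eigenvalues_le c).mpr fun i =>
    h _ _ (by rw [hA.mulVec_eigenvectorBasis, RCLike.real_smul_eq_coe_smul (K := 𝕜)])
      (by simpa using hA.eigenvectorBasis.orthonormal.ne_zero i)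

theorem PosSemidef.le_one_of_trace_eq_one [Fintype m] [DecidableEq m] {A : Matrix m m 𝕜}
    (hA : A.PosSemidef) (htr : A.trace = 1) : A ≤ 1 := by
  have hsum : ∑ i, hA.1.eigenvalues i = 1 := by
    simpa [htr] using (congrArg RCLike.re hA.1.trace_eq_sum_eigenvalues).symm
  rw [← map_one (algebraMap ℝ (Matrix m m 𝕜)), hA.1.le_algebraMap_iff_eigenvalues_le]
  exact fun i => hsum ▸ Finset.single_le_sum (fun j _ => hA.eigenvalues_nonneg j)
    (Finset.mem_univ i)

theorem dotProduct_mulVec_le_of_le [Fintype m] {A B : Matrix m m 𝕜} (h : A ≤ B) (x : m → 𝕜) :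
    star x ⬝ᵥ (A *ᵥ x) ≤ star x ⬝ᵥ (B *ᵥ x) := by
  have := (le_iff.mp h).dotProduct_mulVec_nonneg x
  rwa [sub_mulVec, dotProduct_sub, sub_nonneg] at this

theorem IsHermitian.re_dotProduct_mulVec_le_iSup_eigenvalues [Fintype m] [DecidableEq m]
    {A : Matrix m m 𝕜} (hA : A.IsHermitian) {x : m → 𝕜} (hx : star x ⬝ᵥ x = 1) :
    RCLike.re (star x ⬝ᵥ (A *ᵥ x)) ≤ ⨆ i, hA.eigenvalues i := by
  have hle := (hA.le_algebraMap_iff_eigenvalues_le _).mpr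
    fun i => le_ciSup (Set.finite_range hA.eigenvalues).bddAbove i
  have := RCLike.re_le_re (dotProduct_mulVec_le_of_le hle x)
  rwa [Algebra.algebraMap_eq_smul_one, smul_mulVec, one_mulVec, dotProduct_smul, hx,
    RCLike.real_smul_eq_coe_mul, mul_one, RCLike.ofReal_re] at this

theorem sum_smul_le_algebraMap_sum [Fintype m] [DecidableEq m] {κ : Type*} (s : Finset κ)
    {μ : κ → ℝ} (hμ : ∀ k, 0 ≤ μ k) {A : κ → Matrix m m 𝕜} {c : κ → ℝ}
    (h : ∀ k, A k ≤ algebraMap ℝ _ (c k)) :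
    ∑ k ∈ s, (μ k : 𝕜) • A k ≤ algebraMap ℝ _ (∑ k ∈ s, μ k * c k) := by
  rw [map_sum]
  refine Finset.sum_le_sum fun k _ => ?_
  rw [map_mul, Algebra.algebraMap_eq_smul_one (μ k), smul_mul_assoc, one_mul,
    RCLike.real_smul_eq_coe_smul (K := 𝕜)]
  exact smul_le_smul_of_nonneg_left (h k) (RCLike.ofReal_nonneg.mpr (hμ k))

theorem submatrix_le_submatrix {A B : Matrix m m 𝕜} (h : A ≤ B) (e : n → m) :
    A.submatrix e e ≤ B.submatrix e e :=
  (le_iff.mp h).submatrix e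

theorem kronecker_le_kronecker [Fintype m] [Fintype n] {A A' : Matrix m m 𝕜}
    {B B' : Matrix n n 𝕜} (hA : 0 ≤ A) (hB : 0 ≤ B) (hAA' : A ≤ A') (hBB' : B ≤ B') :
    A ⊗ₖ B ≤ A' ⊗ₖ B' := by
  have hdecomp : A' ⊗ₖ B' - A ⊗ₖ B = (A' - A) ⊗ₖ B' + A ⊗ₖ (B' - B) := by
    ext ⟨i, j⟩ ⟨k, l⟩
    simp only [sub_apply, add_apply, kronecker_apply]
    ring
  rw [le_iff, hdecomp]
  exact ((le_iff.mp hAA').kronecker (nonneg_iff_posSemidef.mp (hB.trans hBB'))).add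
    ((nonneg_iff_posSemidef.mp hA).kronecker (le_iff.mp hBB'))

end Loewner

section Spectral

variable [RCLike 𝕜] [DecidableEq ι] [Fintype m] [DecidableEq m]

theorem IsHermitian.piKronecker_eq_mul_diagonal_mul_star {A : ι → Matrix m m 𝕜}
    (hA : ∀ i, (A i).IsHermitian) :
    piKronecker A = piKronecker (fun i => ((hA i).eigenvectorUnitary : Matrix m m 𝕜)) *
      diagonal (fun x => ((∏ i, (hA i).eigenvalues (x i) : ℝ) : 𝕜)) *
      star (piKronecker fun i => ((hA i).eigenvectorUnitary : Matrix m m 𝕜)) := by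
  calc piKronecker A = piKronecker fun i => ((hA i).eigenvectorUnitary : Matrix m m 𝕜) *
        diagonal (RCLike.ofReal ∘ (hA i).eigenvalues) *
        star ((hA i).eigenvectorUnitary : Matrix m m 𝕜) :=
        congrArg piKronecker (funext fun i => (hA i).spectral_theorem)
    _ = piKronecker (fun i => ((hA i).eigenvectorUnitary : Matrix m m 𝕜)) *
        piKronecker (fun i => diagonal (RCLike.ofReal ∘ (hA i).eigenvalues)) *
        piKronecker (fun i => star ((hA i).eigenvectorUnitary : Matrix m m 𝕜)) := by
      rw [piKronecker_mul, piKronecker_mul]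
    _ = _ := by
      rw [piKronecker_diagonal, star_eq_conjTranspose, conjTranspose_piKronecker]
      simp [star_eq_conjTranspose]

theorem piKronecker_nonneg {A : ι → Matrix m m 𝕜} (h : ∀ i, 0 ≤ A i) : 0 ≤ piKronecker A := by
  have hA i := nonneg_iff_posSemidef.mp (h i)
  rw [IsHermitian.piKronecker_eq_mul_diagonal_mul_star fun i => (hA i).isHermitian]
  refine star_right_conjugate_nonneg (nonneg_iff_posSemidef.mpr (PosSemidef.diagonal ?_)) _
  exact fun x => RCLike.ofReal_nonneg.mpr
    (Finset.prod_nonneg fun i _ => (hA i).eigenvalues_nonneg _)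

theorem piKronecker_le_algebraMap {A : ι → Matrix m m 𝕜} (h0 : ∀ i, 0 ≤ A i) {r : ι → ℝ}
    (hr : ∀ i, A i ≤ algebraMap ℝ _ (r i)) : piKronecker A ≤ algebraMap ℝ _ (∏ i, r i) := by
  have hA i := nonneg_iff_posSemidef.mp (h0 i)
  have hdiag : diagonal (fun x : ι → m => ((∏ i, (hA i).1.eigenvalues (x i) : ℝ) : 𝕜)) ≤
      algebraMap ℝ _ (∏ i, r i) := by
    rw [le_iff, algebraMap_eq_diagonal, diagonal_sub]
    refine PosSemidef.diagonal fun x => ?_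
    simp only [Pi.algebraMap_apply, RCLike.algebraMap_eq_ofReal, ← RCLike.ofReal_sub]
    refine RCLike.ofReal_nonneg.mpr (sub_nonneg.mpr (Finset.prod_le_prod
      (fun i _ => (hA i).eigenvalues_nonneg _) fun i _ => ?_))
    exact ((hA i).1.le_algebraMap_iff_eigenvalues_le _).mp (hr i) _
  have hW := piKronecker_mul_conjTranspose_eq_one fun i =>
    mem_unitaryGroup_iff.mp (hA i).1.eigenvectorUnitary.2
  rw [IsHermitian.piKronecker_eq_mul_diagonal_mul_star fun i => (hA i).1,
    ← mul_one (algebraMap ℝ _ _), ← hW, ← mul_assoc, Algebra.commutes]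
  exact star_right_conjugate_le_conjugate hdiag _

end Spectral

section Compl

variable [DecidableEq ι]

/-- `ρ ⊗ Q^{⊗Iᶜ}`, with `ρ` acting on the coordinates in `I`. -/
def kroneckerPowCompl [CommMonoid R] (I : Finset ι) (ρ : Matrix (I → m) (I → m) R)
    (Q : Matrix m m R) : Matrix (ι → m) (ι → m) R :=
  of fun x y => ρ (fun i => x i) (fun i => y i) * ∏ j ∈ Iᶜ, Q (x j) (y j)

theorem kroneckerPowCompl_eq_submatrix [CommMonoid R] (I : Finset ι)
    (ρ : Matrix (I → m) (I → m) R) (Q : Matrix m m R) :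
    kroneckerPowCompl I ρ Q = (ρ ⊗ₖ piKronecker fun _ : {j // j ∉ I} => Q).submatrix
      (Equiv.piEquivPiSubtypeProd (· ∈ I) fun _ => m)
      (Equiv.piEquivPiSubtypeProd (· ∈ I) fun _ => m) := by
  ext x y
  simp [kroneckerPowCompl, piKronecker, Finset.prod_subtype Iᶜ (p := (· ∉ I)) (by simp)]

theorem kroneckerPowCompl_le_algebraMap [RCLike 𝕜] [Fintype m] [DecidableEq m] {I : Finset ι}
    {ρ : Matrix (I → m) (I → m) 𝕜} {Q : Matrix m m 𝕜} (hρ0 : 0 ≤ ρ) (hρ1 : ρ ≤ 1) (hQ0 : 0 ≤ Q)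
    {r : ℝ} (hQr : Q ≤ algebraMap ℝ _ r) :
    kroneckerPowCompl I ρ Q ≤ algebraMap ℝ _ (r ^ Iᶜ.card) := by
  have := kronecker_le_kronecker (B := piKronecker fun _ : {j // j ∉ I} => Q) hρ0
    (piKronecker_nonneg fun _ => hQ0) hρ1
    (piKronecker_le_algebraMap (fun _ => hQ0) fun _ => hQr)
  rw [kroneckerPowCompl_eq_submatrix]
  refine (submatrix_le_submatrix this _).trans_eq ?_
  rw [Algebra.algebraMap_eq_smul_one, Algebra.algebraMap_eq_smul_one, kronecker_smul,
    one_kronecker_one, submatrix_smul, Pi.smul_apply, Pi.smul_apply, submatrix_one_equiv,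
    Finset.prod_const, Finset.card_univ, Fintype.card_subtype_compl, Fintype.card_coe,
    Finset.card_compl]

theorem kroneckerPowCompl_vecMulVec [CommMonoid R] [StarMul R] (I : Finset ι) (q : m → R)
    (Q : Matrix m m R) :
    kroneckerPowCompl I
        (vecMulVec (fun z : I → m => ∏ i, q (z i)) (star fun z => ∏ i, q (z i))) Q =
      piKronecker fun i => if i ∈ I then vecMulVec q (star q) else Q := by
  ext x y
  rw [kroneckerPowCompl, piKronecker, of_apply, of_apply, ← Finset.prod_mul_prod_compl I]
  congr 1
  · rw [vecMulVec_apply, Pi.star_apply, star_prod, ← Finset.prod_mul_distrib]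
    refine (Finset.prod_coe_sort I fun i => q (x i) * star (q (y i))).trans
      (Finset.prod_congr rfl fun i hi => ?_)
    rw [if_pos hi, vecMulVec_apply, Pi.star_apply]
  · exact Finset.prod_congr rfl fun i hi => by rw [if_neg (Finset.mem_compl.mp hi)]

theorem dotProduct_kroneckerPowCompl_vecMulVec_mulVec [CommRing R] [StarRing R] [Fintype m]
    (I : Finset ι) {q : m → R} (hq : star q ⬝ᵥ q = 1) (Q : Matrix m m R) :
    star (fun x : ι → m => ∏ i, q (x i)) ⬝ᵥ
        (kroneckerPowCompl I (vecMulVec (fun z : I → m => ∏ i, q (z i))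
          (star fun z => ∏ i, q (z i))) Q *ᵥ fun x => ∏ i, q (x i)) =
      (star q ⬝ᵥ (Q *ᵥ q)) ^ Iᶜ.card := by
  have hfactor (i : ι) : star q ⬝ᵥ ((if i ∈ I then vecMulVec q (star q) else Q) *ᵥ q) =
      if i ∈ Iᶜ then star q ⬝ᵥ (Q *ᵥ q) else 1 := by
    by_cases hi : i ∈ I
    · rw [if_pos hi, if_neg (Finset.notMem_compl.mpr hi), vecMulVec_mulVec, hq,
        MulOpposite.op_one, one_smul, hq]
    · rw [if_neg hi, if_pos (Finset.mem_compl.mpr hi)]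
  rw [kroneckerPowCompl_vecMulVec, star_dotProduct_piKronecker_mulVec (fun _ => q) _ fun _ => q]
  simp only [hfactor, Finset.prod_ite_mem, Finset.univ_inter, Finset.prod_const]

end Compl

end Matrix

theorem stmt5_general {n d : ℕ}
    (Q : Matrix (Fin d) (Fin d) ℂ) (hQ : Q.PosSemidef)
    (q1 : Fin d → ℂ) (hq1norm : dotProduct (star q1) q1 = 1)
    (r : ℝ) (hq1eig : Q *ᵥ q1 = (r : ℂ) • q1)
    (hrmax : ∀ (v : Fin d → ℂ) (s : ℝ), Q *ᵥ v = (s : ℂ) • v → v ≠ 0 → s ≤ r)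
    (μ : Finset (Fin n) → ℝ) (hμ0 : ∀ I, 0 ≤ μ I)
    (ρ : (I : Finset (Fin n)) →
      Matrix ({i // i ∈ I} → Fin d) ({i // i ∈ I} → Fin d) ℂ)
    (hρ : ∀ I, (ρ I).PosSemidef ∧ (ρ I).trace = 1)
    (hA : (∑ I : Finset (Fin n), (↑(μ I) : ℂ) •
      Matrix.of (fun x y : Fin n → Fin d =>
        ρ I (fun i => x i.1) (fun i => y i.1) * ∏ j ∈ Iᶜ, Q (x j) (y j))).IsHermitian)
    (hB : (∑ I : Finset (Fin n), (↑(μ I) : ℂ) •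
      Matrix.of (fun x y : Fin n → Fin d =>
        ((∏ i : {i // i ∈ I}, q1 (x i.1)) * star (∏ i : {i // i ∈ I}, q1 (y i.1))) *
          ∏ j ∈ Iᶜ, Q (x j) (y j))).IsHermitian) :
    ∀ a, hA.eigenvalues a ≤ ⨆ b, hB.eigenvalues b := by
  intro a
  have hQr : Q ≤ algebraMap ℝ _ r := hQ.1.le_algebraMap_of_eigenvalue_le hrmax
  have hq1r : star q1 ⬝ᵥ (Q *ᵥ q1) = r := by
    rw [hq1eig, dotProduct_smul, hq1norm, smul_eq_mul, mul_one]
  set S := ∑ I, μ I * r ^ Iᶜ.card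
  set w : (Fin n → Fin d) → ℂ := fun x => ∏ i, q1 (x i)
  have hAS : ∑ I, (μ I : ℂ) • kroneckerPowCompl I (ρ I) Q ≤ algebraMap ℝ _ S :=
    sum_smul_le_algebraMap_sum _ hμ0 fun I => kroneckerPowCompl_le_algebraMap
      (nonneg_iff_posSemidef.mpr (hρ I).1) ((hρ I).1.le_one_of_trace_eq_one (hρ I).2)
      (nonneg_iff_posSemidef.mpr hQ) hQr
  have hBS : star w ⬝ᵥ ((∑ I, (μ I : ℂ) • kroneckerPowCompl I
      (vecMulVec (fun z : I → Fin d => ∏ i, q1 (z i)) (star fun z => ∏ i, q1 (z i))) Q) *ᵥ w) =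
      S := by
    simp only [sum_mulVec, dotProduct_sum, smul_mulVec, dotProduct_smul, smul_eq_mul, w,
      dotProduct_kroneckerPowCompl_vecMulVec_mulVec _ hq1norm, hq1r, S]
    push_cast
    rfl
  have hw : star w ⬝ᵥ w = 1 := by
    simpa [piKronecker_one, hq1norm] using
      star_dotProduct_piKronecker_mulVec (fun _ : Fin n => q1) (fun _ => 1) fun _ => q1
  calc hA.eigenvalues a ≤ S := (hA.le_algebraMap_iff_eigenvalues_le S).mp hAS a
    _ = RCLike.re (star w ⬝ᵥ (_ *ᵥ w)) := (congrArg RCLike.re hBS).symm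
    _ ≤ ⨆ b, hB.eigenvalues b := hB.re_dotProduct_mulVec_le_iSup_eigenvalues hw

/-- Spin alignment for the largest eigenvalue: for any state `Q` with maximal unit
eigenvector `q₁`, probability measure `μ` on subsets of `[n]`, and tuple of states
`(ρ_I)`, the largest eigenvalue of the alignment operator `∑_I μ_I ρ_I ⊗ Q^{⊗Iᶜ}` is at
most that of the one with `ρ_I = |q₁⟩⟨q₁|^{⊗I}`. -/
theorem stmt5 {n d : ℕ} (hd : 0 < d)
    (Q : Matrix (Fin d) (Fin d) ℂ) (hQ : Q.PosSemidef) (hQtr : Q.trace = 1)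
    (q1 : Fin d → ℂ) (hq1norm : dotProduct (star q1) q1 = 1)
    (r : ℝ) (hq1eig : Q *ᵥ q1 = (r : ℂ) • q1)
    (hrmax : ∀ (v : Fin d → ℂ) (s : ℝ), Q *ᵥ v = (s : ℂ) • v → v ≠ 0 → s ≤ r)
    (μ : Finset (Fin n) → ℝ) (hμ0 : ∀ I, 0 ≤ μ I) (hμ1 : ∑ I, μ I = 1)
    (ρ : (I : Finset (Fin n)) →
      Matrix ({i // i ∈ I} → Fin d) ({i // i ∈ I} → Fin d) ℂ)
    (hρ : ∀ I, (ρ I).PosSemidef ∧ (ρ I).trace = 1)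
    (hA : (∑ I : Finset (Fin n), (↑(μ I) : ℂ) •
      Matrix.of (fun x y : Fin n → Fin d =>
        ρ I (fun i => x i.1) (fun i => y i.1) * ∏ j ∈ Iᶜ, Q (x j) (y j))).IsHermitian)
    (hB : (∑ I : Finset (Fin n), (↑(μ I) : ℂ) •
      Matrix.of (fun x y : Fin n → Fin d =>
        ((∏ i : {i // i ∈ I}, q1 (x i.1)) * star (∏ i : {i // i ∈ I}, q1 (y i.1))) *
          ∏ j ∈ Iᶜ, Q (x j) (y j))).IsHermitian) :
    ∀ a, hA.eigenvalues a ≤ ⨆ b, hB.eigenvalues b :=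
  stmt5_general Q hQ q1 hq1norm r hq1eig hrmax μ hμ0 ρ hρ hA hB
end

section
/- Let $P_1, P_2$ be orthogonal projectors on a $d$-dimensional Hilbert space with ranks $r_1, r_2$. If $r_1 + r_2 - d > \lfloor c \rfloor$ for some $c\ge 0$, then $\operatorname{tr}(|P_1 P_2|) > c$, where $|X| = \sqrt{X^* X}$. -/
/-!
With `Qᵢ = 1 - Pᵢ`, the matrix `Q₁ Q₂ Q₁` is positive semidefinite, and its trace is
`d - r₁ - r₂ + tr (P₁ P₂)`; hence `tr (P₁ P₂) ≥ r₁ + r₂ - d ≥ ⌊c⌋ + 1 > c`.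
On the other hand `A = (P₁ P₂)ᴴ (P₁ P₂) = P₂ P₁ P₂` has the same trace as `P₁ P₂` and
`0 ≤ A ≤ 1`, so its eigenvalues `λ` lie in `[0, 1]`, where `λ ≤ √λ`. Summing,
`tr (P₁ P₂) = ∑ λ ≤ ∑ √λ = tr |P₁ P₂|`.
-/

open Matrix
open scoped ComplexOrder

/-- The positive semidefinite square root of a positive semidefinite matrix
(the definition `Matrix.PosSemidef.sqrt` of the older Mathlib, since removed). -/
noncomputable def Matrix.PosSemidef.sqrt {n : Type*} [Fintype n] [DecidableEq n]
    {𝕜 : Type*} [RCLike 𝕜] {A : Matrix n n 𝕜} (hA : A.PosSemidef) : Matrix n n 𝕜 :=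
  (hA.1.eigenvectorUnitary : Matrix n n 𝕜) *
    diagonal (((↑) : ℝ → 𝕜) ∘ (√·) ∘ hA.1.eigenvalues) *
  (star hA.1.eigenvectorUnitary : Matrix n n 𝕜)

namespace Matrix

variable {n 𝕜 : Type*} [Fintype n] [RCLike 𝕜]

namespace IsStarProjection

variable {P Q : Matrix n n 𝕜}

theorem conjTranspose_eq (hP : IsStarProjection P) : Pᴴ = P :=
  hP.isSelfAdjoint

theorem posSemidef (hP : IsStarProjection P) : P.PosSemidef := by
  simpa [hP.conjTranspose_eq, hP.isIdempotentElem.eq] using posSemidef_conjTranspose_mul_self P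

theorem conjTranspose_mul_mul_self (hP : IsStarProjection P) (hQ : IsStarProjection Q) :
    (P * Q)ᴴ * (P * Q) = Q * P * Q := by
  rw [conjTranspose_mul, hP.conjTranspose_eq, hQ.conjTranspose_eq, mul_assoc, ← mul_assoc P,
    hP.isIdempotentElem.eq, mul_assoc]

theorem trace_conjTranspose_mul_mul_self (hP : IsStarProjection P) (hQ : IsStarProjection Q) :
    ((P * Q)ᴴ * (P * Q)).trace = (P * Q).trace := by
  rw [hP.conjTranspose_mul_mul_self hQ, trace_mul_cycle, hQ.isIdempotentElem.eq, trace_mul_comm]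

end IsStarProjection

variable [DecidableEq n]

theorem trace_eq_rank_of_isIdempotentElem_s8 {K : Type*} [Field K] {P : Matrix n n K}
    (hP : IsIdempotentElem P) : P.trace = P.rank := by
  have h : IsIdempotentElem (toLinAlgEquiv' P) := hP.map toLinAlgEquiv'
  rw [← trace_toLin'_eq]
  exact (LinearMap.IsIdempotentElem.isProj_range _ h).trace

theorem IsHermitian.eigenvalues_le_one {A : Matrix n n 𝕜} (hA : A.IsHermitian)
    (hA1 : (1 - A).PosSemidef) (i : n) : hA.eigenvalues i ≤ 1 := by
  set v := hA.eigenvectorBasis i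
  have hv : star ⇑v ⬝ᵥ ⇑v = (1 : 𝕜) := by
    rw [dotProduct_comm, ← EuclideanSpace.inner_eq_star_dotProduct, inner_self_eq_norm_sq_to_K,
      hA.eigenvectorBasis.orthonormal.1 i]
    simp
  have h := hA1.dotProduct_mulVec_nonneg v
  rw [sub_mulVec, one_mulVec, dotProduct_sub, hv] at h
  rw [hA.eigenvalues_eq i]
  simpa [sub_nonneg] using (RCLike.nonneg_iff.1 h).1

theorem PosSemidef.trace_sqrt {A : Matrix n n 𝕜} (hA : A.PosSemidef) :
    hA.sqrt.trace = ∑ i, (√(hA.1.eigenvalues i) : 𝕜) := by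
  rw [PosSemidef.sqrt, trace_mul_cycle, Unitary.coe_star_mul_self, one_mul, trace_diagonal]
  rfl

theorem PosSemidef.re_trace_le_re_trace_sqrt {A : Matrix n n 𝕜} (hA : A.PosSemidef)
    (hA1 : (1 - A).PosSemidef) : RCLike.re A.trace ≤ RCLike.re hA.sqrt.trace := by
  rw [hA.trace_sqrt, hA.1.trace_eq_sum_eigenvalues, map_sum, map_sum]
  refine Finset.sum_le_sum fun i _ => ?_
  simpa using hA.1.eigenvalues_le_one hA1 i

namespace IsStarProjection

variable {P Q : Matrix n n 𝕜}

theorem re_trace (hP : IsStarProjection P) : RCLike.re P.trace = P.rank := by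
  simp [trace_eq_rank_of_isIdempotentElem_s8 hP.isIdempotentElem]

theorem posSemidef_one_sub_mul_mul (hP : IsStarProjection P) (hQ : IsStarProjection Q) :
    (1 - P * Q * P).PosSemidef := by
  have h : 1 - P * Q * P = (1 - P) + P * (1 - Q) * Pᴴ := by
    rw [hP.conjTranspose_eq, mul_sub, mul_one, sub_mul, hP.isIdempotentElem.eq]
    abel
  rw [h]
  exact hP.one_sub.posSemidef.add (hQ.one_sub.posSemidef.mul_mul_conjTranspose_same P)

theorem rank_add_rank_sub_card_le_re_trace_mul (hP : IsStarProjection P)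
    (hQ : IsStarProjection Q) :
    (P.rank + Q.rank - Fintype.card n : ℝ) ≤ RCLike.re (P * Q).trace := by
  have h : 0 ≤ RCLike.re ((1 - P) * (1 - Q) * (1 - P)ᴴ).trace :=
    (RCLike.nonneg_iff.1 (hQ.one_sub.posSemidef.mul_mul_conjTranspose_same _).trace_nonneg).1
  rw [hP.one_sub.conjTranspose_eq, trace_mul_cycle, hP.one_sub.isIdempotentElem.eq] at h
  simp only [sub_mul, mul_sub, one_mul, mul_one, trace_sub, trace_one, map_sub,
    hP.re_trace, hQ.re_trace, RCLike.natCast_re] at h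
  linarith

end IsStarProjection

end Matrix

theorem stmt8_general {d : ℕ} (P1 P2 : Matrix (Fin d) (Fin d) ℂ)
    (h1 : P1.IsHermitian) (h1i : P1 * P1 = P1)
    (h2 : P2.IsHermitian) (h2i : P2 * P2 = P2)
    (r1 r2 : ℕ) (hr1 : P1.rank = r1) (hr2 : P2.rank = r2)
    (c : ℝ) (hgap : (⌊c⌋ : ℤ) < (r1 : ℤ) + (r2 : ℤ) - (d : ℤ)) :
    c < (((Matrix.posSemidef_conjTranspose_mul_self (P1 * P2)).sqrt).trace).re := by
  have hP1 : IsStarProjection P1 := ⟨h1i, h1⟩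
  have hP2 : IsStarProjection P2 := ⟨h2i, h2⟩
  have hA1 : (1 - (P1 * P2)ᴴ * (P1 * P2)).PosSemidef := by
    rw [hP1.conjTranspose_mul_mul_self hP2]
    exact hP2.posSemidef_one_sub_mul_mul hP1
  calc c < ⌊c⌋ + 1 := Int.lt_floor_add_one c
    _ ≤ r1 + r2 - d := by exact_mod_cast hgap
    _ ≤ (P1 * P2).trace.re := by
      simpa [hr1, hr2] using hP1.rank_add_rank_sub_card_le_re_trace_mul hP2
    _ = ((P1 * P2)ᴴ * (P1 * P2)).trace.re := by rw [hP1.trace_conjTranspose_mul_mul_self hP2]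
    _ ≤ _ := (posSemidef_conjTranspose_mul_self (P1 * P2)).re_trace_le_re_trace_sqrt hA1

/-- If projectors `P₁, P₂` on `ℂ^d` have ranks `r₁, r₂` with `r₁ + r₂ - d > ⌊c⌋`, then
`tr |P₁ P₂| > c`, where `|X| = √(X^*X)`. -/
theorem stmt8 {d : ℕ} (P1 P2 : Matrix (Fin d) (Fin d) ℂ)
    (h1 : P1.IsHermitian) (h1i : P1 * P1 = P1)
    (h2 : P2.IsHermitian) (h2i : P2 * P2 = P2)
    (r1 r2 : ℕ) (hr1 : P1.rank = r1) (hr2 : P2.rank = r2)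
    (c : ℝ) (hc : 0 ≤ c) (hgap : (⌊c⌋ : ℤ) < (r1 : ℤ) + (r2 : ℤ) - (d : ℤ)) :
    c < (((Matrix.posSemidef_conjTranspose_mul_self (P1 * P2)).sqrt).trace).re :=
  stmt8_general P1 P2 h1 h1i h2 h2i r1 r2 hr1 hr2 c hgap
end

section
/- Let $A\subseteq\mathbb{R}$ be convex, $g:A\to\mathbb{R}_{\ge 0}$ convex, and $t\in\mathbb{R}$. Define $G:A^m\to\mathbb{R}^{2m}$ by $G(v) = (t+g(v_1),\ldots,t+g(v_m), t-g(v_1),\ldots,t-g(v_m))$. Then $G$ is strictly isotone with respect to majorization: if $v\succeq w$ (componentwise vectors in $A^m$), then $G(v)\succeq G(w)$. -/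
/-!
Majorization `x ≻ y` gives `∑ (y i - c)⁺ ≤ ∑ (x i - c)⁺` for every level `c` (compare the entries of
`y` above `c` with equally many entries of `x`); conversely these hinge inequalities give back weak
submajorization, since the sum of the `k` largest entries of `f` is `min_c (k c + ∑ (f i - c)⁺)`.
On a finite set a convex function agrees with an affine function plus a nonnegative combination of
hinges `(x - p)⁺`, which yields Karamata's inequality; applied to the convex functions `(g - c)⁺`
it shows that `g ∘ v` weakly submajorizes `g ∘ w`. Finally, a set of entries of `G(w)` taking the
`+` entries at `s₁` and the `-` entries at `s₂` has, as `g ≥ 0`, sum at most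
`|s| t + ∑_{s₁ \ s₂} g(w i)`. A set dominating `s₁ \ s₂` in `g ∘ v`, enlarged by `+` entries (or,
when `|s| > m`, completed by all `+` entries and the complementary `-` entries), gives `|s|` entries
of `G(v)` with at least that sum.
-/

open Finset

variable {ι : Type*}

def WeakMaj [Fintype ι] (x y : ι → ℝ) : Prop :=
  ∀ s : Finset ι, ∃ t : Finset ι, t.card = s.card ∧ ∑ i ∈ s, y i ≤ ∑ i ∈ t, x i

theorem Maj.weakMaj [Fintype ι] {x y : ι → ℝ} (h : Maj x y) : WeakMaj x y := h.1

theorem exists_card_eq_forall_notMem_le [Fintype ι] (f : ι → ℝ) {k : ℕ} (hk : k ≤ Fintype.card ι) :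
    ∃ p : Finset ι, p.card = k ∧ ∀ i ∈ p, ∀ j ∉ p, f j ≤ f i := by
  classical
  induction k with
  | zero => exact ⟨∅, rfl, by simp⟩
  | succ k ih =>
    obtain ⟨p, hpk, hp⟩ := ih (by omega)
    have hne : pᶜ.Nonempty := by
      rw [← card_pos, card_compl]
      omega
    obtain ⟨j, hj, hjmax⟩ := pᶜ.exists_max_image f hne
    refine ⟨insert j p, by rw [card_insert_of_notMem (mem_compl.1 hj), hpk], ?_⟩
    intro i hi l hl
    rw [mem_insert, not_or] at hl
    rcases mem_insert.1 hi with rfl | hi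
    · exact hjmax l (mem_compl.2 hl.2)
    · exact hp i hi l hl.2

theorem sum_le_card_mul_add_sum_posPart [Fintype ι] (f : ι → ℝ) (s : Finset ι) (c : ℝ) :
    ∑ i ∈ s, f i ≤ s.card * c + ∑ i, (f i - c)⁺ :=
  calc ∑ i ∈ s, f i ≤ ∑ i ∈ s, (c + (f i - c)⁺) :=
        sum_le_sum fun i _ => by linarith [le_posPart (f i - c)]
    _ = s.card * c + ∑ i ∈ s, (f i - c)⁺ := by rw [sum_add_distrib, sum_const, nsmul_eq_mul]
    _ ≤ s.card * c + ∑ i, (f i - c)⁺ :=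
        add_le_add_right (sum_le_sum_of_subset_of_nonneg (subset_univ s)
          fun i _ _ => posPart_nonneg _) _

theorem sum_eq_card_mul_add_sum_posPart [Fintype ι] {f : ι → ℝ} {p : Finset ι} {c : ℝ}
    (hp : ∀ i ∈ p, c ≤ f i) (hc : ∀ j ∉ p, f j ≤ c) :
    ∑ i ∈ p, f i = p.card * c + ∑ i, (f i - c)⁺ := by
  have : ∑ i, (f i - c)⁺ = ∑ i ∈ p, (f i - c) := by
    rw [← sum_subset (subset_univ p) fun j _ hj => posPart_eq_zero.2 (sub_nonpos.2 (hc j hj))]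
    exact sum_congr rfl fun i hi => posPart_eq_self.2 (sub_nonneg.2 (hp i hi))
  rw [this, sum_sub_distrib, sum_const, nsmul_eq_mul]
  ring

theorem weakMaj_iff_sum_posPart_sub_le [Fintype ι] {x y : ι → ℝ} :
    WeakMaj x y ↔ ∀ c, ∑ i, (y i - c)⁺ ≤ ∑ i, (x i - c)⁺ := by
  classical
  constructor
  · intro h c
    set s := univ.filter fun i => c < y i
    obtain ⟨t, hts, hst⟩ := h s
    have hs := sum_eq_card_mul_add_sum_posPart (f := y) (p := s) (c := c)
      (fun i hi => (mem_filter.1 hi).2.le) fun j hj => not_lt.1 fun hlt => hj (by simp [s, hlt])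
    have ht := sum_le_card_mul_add_sum_posPart x t c
    rw [hts] at ht
    linarith
  · intro h s
    obtain ⟨p, hps, htop⟩ := exists_card_eq_forall_notMem_le x (card_le_univ s)
    rcases p.eq_empty_or_nonempty with rfl | hne
    · rw [card_empty, eq_comm, card_eq_zero] at hps
      exact ⟨∅, by simp [hps], by simp [hps]⟩
    refine ⟨p, hps, ?_⟩
    rw [sum_eq_card_mul_add_sum_posPart (c := p.inf' hne x) (fun i hi => inf'_le _ hi)
      fun j hj => le_inf' _ _ fun i hi => htop i hi j hj, hps]
    linarith [sum_le_card_mul_add_sum_posPart y s (p.inf' hne x), h (p.inf' hne x)]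

inductive IsHingeSum : (ℝ → ℝ) → Prop
  | affine (α β : ℝ) : IsHingeSum fun x => α + β * x
  | add_hinge {ψ : ℝ → ℝ} (hψ : IsHingeSum ψ) {c : ℝ} (hc : 0 ≤ c) (p : ℝ) :
      IsHingeSum fun x => ψ x + c * (x - p)⁺

theorem Maj.sum_le_sum_of_isHingeSum [Fintype ι] {x y : ι → ℝ} (h : Maj x y) {ψ : ℝ → ℝ}
    (hψ : IsHingeSum ψ) : ∑ i, ψ (y i) ≤ ∑ i, ψ (x i) := by
  induction hψ with
  | affine α β => simp only [sum_add_distrib, ← mul_sum, h.2, le_refl]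
  | @add_hinge ψ _ c hc p ih =>
    simp only [sum_add_distrib, ← mul_sum]
    gcongr ?_ + c * ?_
    exact weakMaj_iff_sum_posPart_sub_le.1 h.weakMaj p

theorem ConvexOn.exists_isHingeSum_extend {A : Set ℝ} {φ ψ : ℝ → ℝ} (hφ : ConvexOn ℝ A φ)
    (hψ : IsHingeSum ψ) {α σ p₀ q : ℝ} (hp₀ : p₀ ∈ A) (hp₀q : p₀ < q)
    (haff : ∀ x, p₀ ≤ x → ψ x = α + σ * x) (hψp₀ : ψ p₀ = φ p₀) (hψq : ψ q ≤ φ q) :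
    ∃ ψ' α' σ', IsHingeSum ψ' ∧ (∀ x ≤ p₀, ψ' x = ψ x) ∧ ψ' q = φ q ∧
      (∀ x, p₀ ≤ x → ψ' x = α' + σ' * x) ∧ ∀ x ∈ A, q ≤ x → ψ' x ≤ φ x := by
  have hqp₀ : 0 < q - p₀ := sub_pos.2 hp₀q
  set δ := (φ q - ψ q) / (q - p₀)
  have hδ : δ * (q - p₀) = φ q - ψ q := div_mul_cancel₀ _ hqp₀.ne'
  have haff' : ∀ x, p₀ ≤ x → ψ x + δ * (x - p₀)⁺ = (α - δ * p₀) + (σ + δ) * x := fun x hx => by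
    rw [haff x hx, posPart_eq_self.2 (sub_nonneg.2 hx)]
    ring
  have hψ'q : ψ q + δ * (q - p₀)⁺ = φ q := by
    rw [posPart_eq_self.2 hqp₀.le, hδ]
    ring
  refine ⟨fun x => ψ x + δ * (x - p₀)⁺, α - δ * p₀, σ + δ,
    hψ.add_hinge (div_nonneg (sub_nonneg.2 hψq) hqp₀.le) p₀,
    fun x hx => by simp [posPart_eq_zero.2 (sub_nonpos.2 hx)], hψ'q, haff', fun x hx hqx => ?_⟩
  rcases hqx.eq_or_lt with rfl | hqx
  · exact hψ'q.le
  -- the affine piece through `(p₀, φ p₀)` and `(q, φ q)` is the secant line of `φ`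
  have hslope : σ + δ = (φ q - φ p₀) / (q - p₀) := by
    rw [eq_div_iff hqp₀.ne', ← hψ'q, haff' q hp₀q.le, ← hψp₀, haff p₀ le_rfl]
    ring
  have hconv := hφ.slope_mono_adjacent hp₀ hx hp₀q hqx
  rw [← hslope, le_div_iff₀ (sub_pos.2 hqx)] at hconv
  simp only
  rw [haff' x (hp₀q.trans hqx).le]
  linarith [haff' q hp₀q.le]

theorem ConvexOn.exists_isHingeSum_eqOn {A : Set ℝ} {φ : ℝ → ℝ} (hφ : ConvexOn ℝ A φ)
    {S : Finset ℝ} (hS : ↑S ⊆ A) : ∃ ψ, IsHingeSum ψ ∧ Set.EqOn ψ φ S := by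
  classical
  suffices key : ∀ P ⊆ S, ∃ ψ α σ, IsHingeSum ψ ∧ Set.EqOn ψ φ P ∧
      (∀ x, (∀ p ∈ P, p ≤ x) → ψ x = α + σ * x) ∧ ∀ x ∈ S, (∀ p ∈ P, p ≤ x) → ψ x ≤ φ x by
    obtain ⟨ψ, -, -, hψ, hEq, -⟩ := key S subset_rfl
    exact ⟨ψ, hψ, hEq⟩
  intro P
  induction P using Finset.induction_on_max with
  | empty =>
    intro _
    obtain ⟨α, hα⟩ := (S.image φ).bddBelow
    exact ⟨fun x => α + 0 * x, α, 0, .affine α 0, by simp, fun _ _ => rfl,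
      fun x hx _ => by simpa using hα (mem_image_of_mem φ hx)⟩
  | insert q P hlt ih =>
    intro hPS
    have hqS : q ∈ S := hPS (mem_insert_self q P)
    obtain ⟨ψ, α, σ, hψ, hEq, haff, hle⟩ := ih ((subset_insert q P).trans hPS)
    rcases P.eq_empty_or_nonempty with rfl | hne
    · obtain ⟨σ', hσ'⟩ := (S.image (slope φ q)).bddBelow
      refine ⟨fun x => φ q - σ' * q + σ' * x, φ q - σ' * q, σ', .affine _ σ', by simp,
        fun _ _ => rfl, fun x hx hqx => ?_⟩
      rcases (hqx q (mem_insert_self q ∅)).eq_or_lt with rfl | hqx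
      · simp
      · have := hσ' (mem_image_of_mem _ hx)
        rw [slope_def_field, le_div_iff₀ (sub_pos.2 hqx)] at this
        linarith
    have hp₀ := P.max'_mem hne
    obtain ⟨ψ', α', σ', hψ', hleft, hq, haff', hle'⟩ := hφ.exists_isHingeSum_extend hψ
      (hS (hPS (mem_insert_of_mem hp₀))) (hlt _ hp₀) (fun x hx => haff x fun p hp =>
        (P.le_max' p hp).trans hx) (hEq hp₀) (hle q hqS fun p hp => (hlt p hp).le)
    refine ⟨ψ', α', σ', hψ', fun x hx => ?_, fun x hx => haff' x (hx _ (mem_insert_of_mem hp₀)),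
      fun x hx hqx => hle' x (hS hx) (hqx q (mem_insert_self q P))⟩
    rcases mem_insert.1 hx with rfl | hx
    · exact hq
    · rw [hleft x (P.le_max' x hx), hEq hx]

theorem Maj.sum_le_sum_of_convexOn [Fintype ι] {x y : ι → ℝ} (h : Maj x y) {A : Set ℝ}
    {φ : ℝ → ℝ} (hφ : ConvexOn ℝ A φ) (hx : ∀ i, x i ∈ A) (hy : ∀ i, y i ∈ A) :
    ∑ i, φ (y i) ≤ ∑ i, φ (x i) := by
  classical
  obtain ⟨ψ, hψ, hEq⟩ := hφ.exists_isHingeSum_eqOn (S := univ.image x ∪ univ.image y)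
    (by simp only [coe_union, coe_image, coe_univ, Set.image_univ, Set.union_subset_iff,
      Set.range_subset_iff]; exact ⟨hx, hy⟩)
  calc ∑ i, φ (y i) = ∑ i, ψ (y i) := sum_congr rfl fun i _ => (hEq (by simp)).symm
    _ ≤ ∑ i, ψ (x i) := h.sum_le_sum_of_isHingeSum hψ
    _ = ∑ i, φ (x i) := sum_congr rfl fun i _ => hEq (by simp)

theorem Maj.weakMaj_comp [Fintype ι] {x y : ι → ℝ} (h : Maj x y) {A : Set ℝ} {g : ℝ → ℝ}
    (hg : ConvexOn ℝ A g) (hx : ∀ i, x i ∈ A) (hy : ∀ i, y i ∈ A) :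
    WeakMaj (fun i => g (x i)) (fun i => g (y i)) :=
  weakMaj_iff_sum_posPart_sub_le.2 fun c =>
    h.sum_le_sum_of_convexOn ((hg.add_const (-c)).sup (convexOn_const 0 hg.1)) hx hy

theorem sum_disjSum_sumElim_add_sub (a : ι → ℝ) (t : ℝ) (Q₁ Q₂ : Finset ι) :
    ∑ i ∈ Q₁.disjSum Q₂, Sum.elim (fun i => t + a i) (fun i => t - a i) i =
      (Q₁.card + Q₂.card) * t + (∑ i ∈ Q₁, a i - ∑ i ∈ Q₂, a i) := by
  simp only [sum_disjSum, Sum.elim_inl, Sum.elim_inr, sum_add_distrib, sum_sub_distrib, sum_const,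
    nsmul_eq_mul]
  ring

theorem exists_card_add_card_eq_sum_le_sum_sub_sum [Fintype ι] {a : ι → ℝ} (ha : 0 ≤ a)
    {p : Finset ι} {k : ℕ} (hpk : p.card ≤ k) (hk : k + p.card ≤ 2 * Fintype.card ι) :
    ∃ Q₁ Q₂ : Finset ι, Q₁.card + Q₂.card = k ∧ ∑ i ∈ p, a i ≤ ∑ i ∈ Q₁, a i - ∑ i ∈ Q₂, a i := by
  classical
  have hmono : ∀ q, p ⊆ q → ∑ i ∈ p, a i ≤ ∑ i ∈ q, a i :=
    fun q hpq => sum_le_sum_of_subset_of_nonneg hpq fun i _ _ => ha i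
  rcases le_total k (Fintype.card ι) with hkn | hnk
  · obtain ⟨q, hpq, -, hq⟩ := exists_subsuperset_card_eq (subset_univ p) hpk (by simpa using hkn)
    exact ⟨q, ∅, by simpa using hq, by simpa using hmono q hpq⟩
  · obtain ⟨q, hpq, -, hq⟩ := exists_subsuperset_card_eq (n := 2 * Fintype.card ι - k)
      (subset_univ p) (by omega) (by simp; omega)
    refine ⟨univ, univ \ q, ?_, ?_⟩
    · rw [card_univ, card_sdiff_of_subset (subset_univ q), hq, card_univ]
      omega
    · rw [sum_sdiff_eq_sub (subset_univ q), sub_sub_cancel]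
      exact hmono q hpq

theorem WeakMaj.maj_sumElim [Fintype ι] {a b : ι → ℝ} (h : WeakMaj a b) (ha : 0 ≤ a) (hb : 0 ≤ b)
    (t : ℝ) : Maj (Sum.elim (fun i => t + a i) (fun i => t - a i))
      (Sum.elim (fun i => t + b i) (fun i => t - b i)) := by
  classical
  refine ⟨fun s => ?_, ?_⟩
  · set s₁ := s.toLeft
    set s₂ := s.toRight
    have hs : s₁.card + s₂.card = s.card := card_toLeft_add_card_toRight
    obtain ⟨p, hp, hbp⟩ := h (s₁ \ s₂)
    have hs₁ : (s₁ \ s₂).card ≤ s₁.card := card_le_card sdiff_subset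
    have hs₂ : (s₁ \ s₂).card + s₂.card ≤ Fintype.card ι := by
      rw [card_sdiff_add_card]
      exact card_le_univ _
    obtain ⟨Q₁, Q₂, hQ, hpQ⟩ := exists_card_add_card_eq_sum_le_sum_sub_sum ha (k := s.card)
      (p := p) (by omega) (by have := card_le_univ s₁; omega)
    refine ⟨Q₁.disjSum Q₂, by rw [card_disjSum, hQ], ?_⟩
    have hb₁₂ : ∑ i ∈ s₁, b i - ∑ i ∈ s₂, b i ≤ ∑ i ∈ s₁ \ s₂, b i := by
      rw [← sum_inter_add_sum_sdiff s₁ s₂]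
      linarith [sum_le_sum_of_subset_of_nonneg (f := b) (inter_subset_right (s₁ := s₁) (s₂ := s₂))
        fun i _ _ => hb i]
    rw [← toLeft_disjSum_toRight (u := s), sum_disjSum_sumElim_add_sub,
      sum_disjSum_sumElim_add_sub, ← Nat.cast_add, ← Nat.cast_add, hs, hQ]
    linarith
  · rw [← univ_disjSum_univ, sum_disjSum_sumElim_add_sub, sum_disjSum_sumElim_add_sub]
    ring

theorem stmt11_general {m : ℕ} (A : Set ℝ)
    (g : ℝ → ℝ) (hg : ConvexOn ℝ A g) (hg0 : ∀ x ∈ A, 0 ≤ g x)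
    (t : ℝ) (v w : Fin m → ℝ) (hv : ∀ i, v i ∈ A) (hw : ∀ i, w i ∈ A)
    (hvw : Maj v w) :
    Maj (Sum.elim (fun i : Fin m => t + g (v i)) (fun i : Fin m => t - g (v i)))
        (Sum.elim (fun i : Fin m => t + g (w i)) (fun i : Fin m => t - g (w i))) :=
  (hvw.weakMaj_comp hg hv hw).maj_sumElim (fun i => hg0 _ (hv i)) (fun i => hg0 _ (hw i)) t

/-- The map `v ↦ (t + g(v₁), …, t + g(v_m), t - g(v₁), …, t - g(v_m))` is strictly
isotone with respect to majorization when `g` is convex and non-negative on a convex set. -/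
theorem stmt11 {m : ℕ} (A : Set ℝ) (hA : Convex ℝ A)
    (g : ℝ → ℝ) (hg : ConvexOn ℝ A g) (hg0 : ∀ x ∈ A, 0 ≤ g x)
    (t : ℝ) (v w : Fin m → ℝ) (hv : ∀ i, v i ∈ A) (hw : ∀ i, w i ∈ A)
    (hvw : Maj v w) :
    Maj (Sum.elim (fun i : Fin m => t + g (v i)) (fun i : Fin m => t - g (v i)))
        (Sum.elim (fun i : Fin m => t + g (w i)) (fun i : Fin m => t - g (w i))) :=
  stmt11_general A g hg hg0 t v w hv hw hvw
end

section
/- Let $\mathcal{W}$ be a partition of $[n]$ and for each $I\in\mathcal{W}$ let $f_I:\mathcal{D}(\mathcal{H}_I)\to\mathbb{R}$ be continuous, convex, and unitarily invariant. For any probability vector $p$, the maximization of $\sum_{I\in\mathcal{W}} f_I(\tau_I)$ over states $\tau_{[n]}\in\mathcal{D}(\mathcal{H}_{[n]})$ with $\lambda(\tau_{[n]})\preceq p$ admits an optimal point that is diagonal in a fixed product basis (a classical state). -/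
open Matrix
open scoped ComplexOrder

/-- Partial trace onto the systems in `I`. -/
noncomputable def ptr {n : ℕ} (d : Fin n → ℕ) (I : Finset (Fin n))
    (τ : Matrix ((i : Fin n) → Fin (d i)) ((i : Fin n) → Fin (d i)) ℂ) :
    Matrix ((i : {i // i ∈ I}) → Fin (d i.1)) ((i : {i // i ∈ I}) → Fin (d i.1)) ℂ :=
  Matrix.of fun a b => ∑ c : (j : {j // j ∉ I}) → Fin (d j.1),
    τ (fun i => if h : i ∈ I then a ⟨i, h⟩ else c ⟨i, h⟩)
      (fun i => if h : i ∈ I then b ⟨i, h⟩ else c ⟨i, h⟩)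


/-!
Conjugate a state `σ` by the product of local unitaries that diagonalize its marginals `σ_I`;
these act on disjoint systems, so they commute, and each marginal of the result is the
diagonalized `σ_I`. Fully decohering in the product basis leaves all these (diagonal)
marginals unchanged, and the diagonal of a unitary conjugate of `σ` is the image of its
spectrum under the doubly stochastic matrix `(|V_xy|²)`, hence majorized by it. By unitary
invariance every value of the objective is attained at a classical state, and the probability
vectors majorized by `p` form a closed subset of the simplex, on which the continuous objective
has a maximizer.
-/

section Majorization

variable {ι : Type*} [Fintype ι]

theorem Maj.refl (x : ι → ℝ) : Maj x x :=
  ⟨fun s => ⟨s, rfl, le_rfl⟩, rfl⟩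

theorem Maj.trans {x y z : ι → ℝ} (hxy : Maj x y) (hyz : Maj y z) : Maj x z := by
  refine ⟨fun s => ?_, hxy.2.trans hyz.2⟩
  obtain ⟨t, hts, hst⟩ := hyz.1 s
  obtain ⟨u, hut, htu⟩ := hxy.1 t
  exact ⟨u, hut.trans hts, hst.trans htu⟩

theorem isClosed_setOf_maj (x : ι → ℝ) : IsClosed {y | Maj x y} := by
  simp only [Maj, Set.ofPred_and, Set.ofPred_forall, Set.ofPred_exists]
  exact (isClosed_iInter fun s => isClosed_iUnion_of_finite fun t =>
    isClosed_const.inter (isClosed_le (by fun_prop) continuous_const)).inter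
    (isClosed_eq continuous_const (by fun_prop))

theorem exists_card_eq_forall_mem_forall_notMem_le [DecidableEq ι] (x : ι → ℝ) {k : ℕ}
    (hk : k ≤ Fintype.card ι) :
    ∃ t : Finset ι, t.card = k ∧ ∀ i ∈ t, ∀ j ∉ t, x j ≤ x i := by
  induction k with
  | zero => exact ⟨∅, rfl, by simp⟩
  | succ k ih =>
    obtain ⟨t, rfl, ht⟩ := ih (by omega)
    have hne : tᶜ.Nonempty := by
      rw [← Finset.card_pos, Finset.card_compl]
      omega
    obtain ⟨j₀, hj₀, hj₀max⟩ := Finset.exists_max_image tᶜ x hne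
    rw [Finset.mem_compl] at hj₀
    refine ⟨insert j₀ t, Finset.card_insert_of_notMem hj₀, fun i hi j hj => ?_⟩
    rw [Finset.mem_insert, not_or] at hj
    rcases Finset.mem_insert.mp hi with rfl | hi
    · exact hj₀max j (Finset.mem_compl.mpr hj.2)
    · exact ht i hi j hj.2

theorem sum_mul_le_sum_of_forall_mem_forall_notMem_le {x c : ι → ℝ} {t : Finset ι}
    (hc₀ : ∀ j, 0 ≤ c j) (hc₁ : ∀ j, c j ≤ 1) (hct : ∑ j, c j = t.card)
    (ht : ∀ i ∈ t, ∀ j ∉ t, x j ≤ x i) :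
    ∑ j, c j * x j ≤ ∑ j ∈ t, x j := by
  classical
  obtain rfl | ⟨i₀, hi₀⟩ := t.eq_empty_or_nonempty
  · have hc : ∀ j, c j = 0 := fun j =>
      (Finset.sum_eq_zero_iff_of_nonneg fun j _ => hc₀ j).mp (by simpa using hct) j
        (Finset.mem_univ j)
    simp [hc]
  obtain ⟨i₀, hi₀, hmin⟩ := Finset.exists_min_image t x ⟨i₀, hi₀⟩
  -- compare termwise with the threshold `x i₀`, which separates `t` from its complement
  have key : ∀ j, c j * x j ≤ c j * x i₀ + if j ∈ t then x j - x i₀ else 0 := by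
    intro j
    split_ifs with hj
    · nlinarith [hc₁ j, hmin j hj]
    · nlinarith [hc₀ j, ht i₀ hi₀ j hj]
  calc ∑ j, c j * x j ≤ ∑ j, (c j * x i₀ + if j ∈ t then x j - x i₀ else 0) :=
        Finset.sum_le_sum fun j _ => key j
    _ = ∑ j ∈ t, x j := by
        rw [Finset.sum_add_distrib, ← Finset.sum_mul, hct, Finset.sum_ite_mem,
          Finset.univ_inter, Finset.sum_sub_distrib, Finset.sum_const, nsmul_eq_mul]
        ring

theorem maj_mulVec_of_mem_doublyStochastic [DecidableEq ι] {B : Matrix ι ι ℝ}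
    (hB : B ∈ doublyStochastic ℝ ι) (x : ι → ℝ) : Maj x (B *ᵥ x) := by
  obtain ⟨hB₀, hrow, hcol⟩ := mem_doublyStochastic_iff_sum.mp hB
  refine ⟨fun s => ?_, ?_⟩
  · obtain ⟨t, hts, ht⟩ :=
      exists_card_eq_forall_mem_forall_notMem_le x (Finset.card_le_univ s)
    refine ⟨t, hts, ?_⟩
    have hsum : ∑ i ∈ s, (B *ᵥ x) i = ∑ j, (∑ i ∈ s, B i j) * x j := by
      simp only [mulVec, dotProduct, Finset.sum_mul]
      exact Finset.sum_comm
    rw [hsum]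
    refine sum_mul_le_sum_of_forall_mem_forall_notMem_le
      (fun j => Finset.sum_nonneg fun i _ => hB₀ i j)
      (fun j => (Finset.sum_le_sum_of_subset_of_nonneg (Finset.subset_univ s)
        fun i _ _ => hB₀ i j).trans_eq (hcol j)) ?_ ht
    rw [Finset.sum_comm, hts]
    simp [hrow]
  · simp only [mulVec, dotProduct]
    rw [Finset.sum_comm]
    simp [← Finset.sum_mul, hcol]

theorem normSq_mem_doublyStochastic [DecidableEq ι] {V : Matrix ι ι ℂ}
    (hV : V ∈ unitaryGroup ι ℂ) :
    Matrix.of (fun i j => Complex.normSq (V i j)) ∈ doublyStochastic ℝ ι := by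
  have hrow := mem_unitaryGroup_iff.mp hV
  have hcol := mem_unitaryGroup_iff'.mp hV
  refine mem_doublyStochastic_iff_sum.mpr ⟨fun i j => Complex.normSq_nonneg _, fun i => ?_,
    fun j => ?_⟩
  · have := congrFun (congrFun hrow i) i
    simp only [mul_apply, star_apply, RCLike.star_def, Complex.mul_conj, one_apply_eq] at this
    exact_mod_cast this
  · have := congrFun (congrFun hcol j) j
    simp only [mul_apply, star_apply, RCLike.star_def, mul_comm (starRingEnd ℂ _),
      Complex.mul_conj, one_apply_eq] at this
    exact_mod_cast this

theorem maj_diag_unitary_mul_diagonal_mul [DecidableEq ι] {V : Matrix ι ι ℂ}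
    (hV : V ∈ unitaryGroup ι ℂ) (r : ι → ℝ) :
    Maj r (fun i => ((V * diagonal (fun j => (r j : ℂ)) * Vᴴ) i i).re) := by
  convert maj_mulVec_of_mem_doublyStochastic (normSq_mem_doublyStochastic hV) r using 1
  ext i
  simp only [mul_apply, diagonal_apply, conjTranspose_apply, mul_ite, mul_zero,
    Finset.sum_ite_eq', Finset.mem_univ, if_true, RCLike.star_def, mulVec, dotProduct, of_apply,
    Complex.re_sum]
  refine Finset.sum_congr rfl fun j _ => ?_
  rw [mul_right_comm, Complex.mul_conj, ← Complex.ofReal_mul, Complex.ofReal_re]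

theorem Matrix.IsHermitian.star_eigenvectorUnitary_mul_mul [DecidableEq ι] {𝕜 : Type*}
    [RCLike 𝕜] {A : Matrix ι ι 𝕜} (hA : A.IsHermitian) :
    star (hA.eigenvectorUnitary : Matrix ι ι 𝕜) * A * (hA.eigenvectorUnitary : Matrix ι ι 𝕜) =
      diagonal (RCLike.ofReal ∘ hA.eigenvalues) := by
  simpa using hA.conjStarAlgAut_star_eigenvectorUnitary

theorem Matrix.IsHermitian.maj_eigenvalues_diag_unitary_mul_mul [DecidableEq ι]
    {A W : Matrix ι ι ℂ} (hA : A.IsHermitian) (hW : W ∈ unitaryGroup ι ℂ) :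
    Maj hA.eigenvalues (fun i => ((W * A * Wᴴ) i i).re) := by
  have hWA : W * A * Wᴴ = (W * (hA.eigenvectorUnitary : Matrix ι ι ℂ)) *
      diagonal (fun j => (hA.eigenvalues j : ℂ)) *
      (W * (hA.eigenvectorUnitary : Matrix ι ι ℂ))ᴴ := by
    conv_lhs => rw [hA.spectral_theorem]
    simp [conjTranspose_mul, mul_assoc, star_eq_conjTranspose, Function.comp_def]
  rw [hWA]
  exact maj_diag_unitary_mul_diagonal_mul (mul_mem hW hA.eigenvectorUnitary.2) _

theorem Matrix.maj_eigenvalues_diagonal [DecidableEq ι] (q : ι → ℝ)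
    (hq : (diagonal fun i => (q i : ℂ)).IsHermitian) : Maj q hq.eigenvalues := by
  convert maj_diag_unitary_mul_diagonal_mul (Unitary.star_mem hq.eigenvectorUnitary.2) q using 1
  ext i
  rw [star_eq_conjTranspose, conjTranspose_conjTranspose, ← star_eq_conjTranspose,
    hq.star_eigenvectorUnitary_mul_mul, diagonal_apply_eq]
  simp

end Majorization

open scoped Kronecker

namespace PartialTrace

variable {n : ℕ}

abbrev Label (d : Fin n → ℕ) := (i : Fin n) → Fin (d i)

abbrev LocalLabel (d : Fin n → ℕ) (I : Finset (Fin n)) := (i : {i // i ∈ I}) → Fin (d i.1)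

variable (d : Fin n → ℕ)

abbrev splitEquiv (I : Finset (Fin n)) :
    Label d ≃ LocalLabel d I × ((j : {j // j ∉ I}) → Fin (d j.1)) :=
  Equiv.piEquivPiSubtypeProd (· ∈ I) fun i => Fin (d i)

noncomputable def localOp (I : Finset (Fin n)) (B : Matrix (LocalLabel d I) (LocalLabel d I) ℂ) :
    Matrix (Label d) (Label d) ℂ :=
  (B ⊗ₖ (1 : Matrix ((j : {j // j ∉ I}) → Fin (d j.1)) _ ℂ)).submatrix (splitEquiv d I)
    (splitEquiv d I)

variable {d} {I : Finset (Fin n)}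

theorem ptr_apply (X : Matrix (Label d) (Label d) ℂ) (a b : LocalLabel d I) :
    ptr d I X a b = ∑ c, X ((splitEquiv d I).symm (a, c)) ((splitEquiv d I).symm (b, c)) :=
  rfl

theorem localOp_apply (B : Matrix (LocalLabel d I) (LocalLabel d I) ℂ) (x y : Label d) :
    localOp d I B x y = if ∀ i ∉ I, x i = y i then B (I.restrict x) (I.restrict y) else 0 := by
  simp only [localOp, submatrix_apply, kroneckerMap_apply, one_apply, mul_ite, mul_one, mul_zero,
    funext_iff, Subtype.forall]
  rfl

theorem localOp_mul (B C : Matrix (LocalLabel d I) (LocalLabel d I) ℂ) :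
    localOp d I (B * C) = localOp d I B * localOp d I C := by
  rw [localOp, localOp, localOp, submatrix_mul_equiv, ← mul_kronecker_mul, mul_one]

theorem localOp_one : localOp d I 1 = 1 := by
  rw [localOp, one_kronecker_one, submatrix_one_equiv]

theorem localOp_conjTranspose (B : Matrix (LocalLabel d I) (LocalLabel d I) ℂ) :
    localOp d I Bᴴ = (localOp d I B)ᴴ := by
  rw [localOp, localOp, conjTranspose_submatrix, conjTranspose_kronecker, conjTranspose_one]

theorem localOp_mem_unitaryGroup {U : Matrix (LocalLabel d I) (LocalLabel d I) ℂ}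
    (hU : U ∈ unitaryGroup _ ℂ) : localOp d I U ∈ unitaryGroup _ ℂ := by
  rw [mem_unitaryGroup_iff, star_eq_conjTranspose, ← localOp_conjTranspose, ← localOp_mul,
    ← star_eq_conjTranspose, mem_unitaryGroup_iff.mp hU, localOp_one]

theorem localOp_mul_localOp_apply {J : Finset (Fin n)} (hIJ : Disjoint I J)
    (B : Matrix (LocalLabel d I) (LocalLabel d I) ℂ)
    (C : Matrix (LocalLabel d J) (LocalLabel d J) ℂ) (x y : Label d) :
    (localOp d I B * localOp d J C) x y =
      if ∀ i ∉ I, i ∉ J → x i = y i then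
        B (I.restrict x) (I.restrict y) * C (J.restrict x) (J.restrict y)
      else 0 := by
  classical
  -- the only intermediate label that contributes agrees with `y` on `I` and with `x` elsewhere
  set z : Label d := fun i => if i ∈ I then y i else x i
  have hxz : ∀ i ∉ I, x i = z i := fun i hi => (if_neg hi).symm
  have hzy : (∀ i ∉ J, z i = y i) ↔ ∀ i ∉ I, i ∉ J → x i = y i :=
    ⟨fun h i hI hJ => (hxz i hI).trans (h i hJ), fun h i hJ => by
      by_cases hI : i ∈ I
      · exact if_pos hI
      · exact (if_neg hI).trans (h i hI hJ)⟩
  have hzI : I.restrict z = I.restrict y := funext fun i => if_pos i.2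
  have hzJ : J.restrict z = J.restrict x :=
    funext fun i => if_neg (Finset.disjoint_right.mp hIJ i.2)
  rw [mul_apply, Finset.sum_eq_single z]
  · rw [localOp_apply, localOp_apply, if_pos hxz, hzI, hzJ]
    simp only [hzy, mul_ite, mul_zero]
  · intro w _ hwz
    rw [localOp_apply, localOp_apply]
    split_ifs with hxw hwy
    · refine absurd (funext fun i => ?_) hwz
      by_cases hI : i ∈ I
      · rw [hwy i (Finset.disjoint_left.mp hIJ hI)]
        exact (if_pos hI).symm
      · rw [← hxw i hI]
        exact (if_neg hI).symm
    all_goals simp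
  · simp

theorem commute_localOp {J : Finset (Fin n)} (hIJ : Disjoint I J)
    (B : Matrix (LocalLabel d I) (LocalLabel d I) ℂ)
    (C : Matrix (LocalLabel d J) (LocalLabel d J) ℂ) :
    Commute (localOp d I B) (localOp d J C) := by
  ext x y
  rw [localOp_mul_localOp_apply hIJ, localOp_mul_localOp_apply hIJ.symm, mul_comm]
  simp only [imp.swap (a := _ ∉ I)]

theorem trace_mul_localOp (X : Matrix (Label d) (Label d) ℂ)
    (B : Matrix (LocalLabel d I) (LocalLabel d I) ℂ) :
    (X * localOp d I B).trace = (ptr d I X * B).trace := by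
  simp only [trace, diag_apply, mul_apply, ptr_apply, localOp, submatrix_apply, kroneckerMap_apply,
    one_apply, mul_ite, mul_one, mul_zero, Finset.sum_mul]
  rw [← (splitEquiv d I).symm.sum_comp, Fintype.sum_prod_type]
  refine Finset.sum_congr rfl fun a _ => (Finset.sum_congr rfl fun c _ => ?_).trans
    Finset.sum_comm
  rw [← (splitEquiv d I).symm.sum_comp, Fintype.sum_prod_type]
  simp

theorem trace_ptr (X : Matrix (Label d) (Label d) ℂ) : (ptr d I X).trace = X.trace := by
  simpa [localOp_one] using (trace_mul_localOp X 1).symm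

theorem ptr_eq_sum_submatrix (X : Matrix (Label d) (Label d) ℂ) :
    ptr d I X = ∑ c, X.submatrix (fun a => (splitEquiv d I).symm (a, c))
      (fun a => (splitEquiv d I).symm (a, c)) := by
  ext a b
  simp [ptr_apply, Matrix.sum_apply]

theorem _root_.Matrix.PosSemidef.ptr {X : Matrix (Label d) (Label d) ℂ} (hX : X.PosSemidef) :
    (ptr d I X).PosSemidef := by
  rw [ptr_eq_sum_submatrix]
  exact posSemidef_sum _ fun c _ => hX.submatrix _

theorem ptr_diagonal (g : Label d → ℂ) :
    ptr d I (diagonal g) = diagonal fun a => ∑ c, g ((splitEquiv d I).symm (a, c)) := by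
  ext a b
  by_cases h : a = b <;> simp [ptr_apply, h]

theorem ptr_diagonal_diag (X : Matrix (Label d) (Label d) ℂ) :
    ptr d I (diagonal X.diag) = diagonal (ptr d I X).diag :=
  ptr_diagonal _

theorem continuous_ptr_diagonal (I : Finset (Fin n)) :
    Continuous fun q : Label d → ℝ => ptr d I (diagonal fun x => (q x : ℂ)) := by
  simp only [ptr_diagonal]
  fun_prop

theorem ptr_conj_of_commute {U : Matrix (LocalLabel d I) (LocalLabel d I) ℂ}
    {R : Matrix (Label d) (Label d) ℂ} (hR : R ∈ unitaryGroup _ ℂ)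
    (hRI : ∀ C, Commute (localOp d I C) R) (X : Matrix (Label d) (Label d) ℂ) :
    ptr d I (localOp d I U * R * X * (localOp d I U * R)ᴴ) = U * ptr d I X * Uᴴ := by
  set W := localOp d I U * R
  have hconj : ∀ B, Wᴴ * localOp d I B * W = localOp d I (Uᴴ * B * U) := fun B => by
    calc Wᴴ * localOp d I B * W = Rᴴ * (localOp d I (Uᴴ * B * U) * R) := by
          simp only [W, localOp_mul, localOp_conjTranspose, conjTranspose_mul, mul_assoc]
      _ = localOp d I (Uᴴ * B * U) := by
          rw [(hRI _).eq, ← mul_assoc, ← star_eq_conjTranspose, mem_unitaryGroup_iff'.mp hR,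
            one_mul]
  refine ext_iff_trace_mul_right.mpr fun B => ?_
  calc (ptr d I (W * X * Wᴴ) * B).trace = (W * (X * Wᴴ * localOp d I B)).trace := by
        rw [← trace_mul_localOp]
        simp only [mul_assoc]
    _ = (X * (Wᴴ * localOp d I B * W)).trace := by
        rw [trace_mul_comm]
        simp only [mul_assoc]
    _ = (ptr d I X * (Uᴴ * B * U)).trace := by rw [hconj, trace_mul_localOp]
    _ = (U * ptr d I X * Uᴴ * B).trace := by
        rw [mul_assoc U, mul_assoc U, trace_mul_comm U]
        simp only [mul_assoc]

variable {𝒲 : Finset (Finset (Fin n))}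

theorem pairwise_commute_localOp (h𝒲 : (𝒲 : Set (Finset (Fin n))).PairwiseDisjoint id)
    (U : (J : Finset (Fin n)) → Matrix (LocalLabel d J) (LocalLabel d J) ℂ) :
    (𝒲 : Set (Finset (Fin n))).Pairwise (Function.onFun Commute fun J => localOp d J (U J)) :=
  fun _ hI _ hJ hIJ => commute_localOp (h𝒲 hI hJ hIJ) _ _

variable (d) in
noncomputable def productOp (𝒲 : Finset (Finset (Fin n)))
    (h𝒲 : (𝒲 : Set (Finset (Fin n))).PairwiseDisjoint id)
    (U : (J : Finset (Fin n)) → Matrix (LocalLabel d J) (LocalLabel d J) ℂ) :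
    Matrix (Label d) (Label d) ℂ :=
  𝒲.noncommProd (fun J => localOp d J (U J)) (pairwise_commute_localOp h𝒲 U)

variable {h𝒲 : (𝒲 : Set (Finset (Fin n))).PairwiseDisjoint id}
  {U : (J : Finset (Fin n)) → Matrix (LocalLabel d J) (LocalLabel d J) ℂ}

theorem productOp_mem_unitaryGroup (hU : ∀ J ∈ 𝒲, U J ∈ unitaryGroup _ ℂ) :
    productOp d 𝒲 h𝒲 U ∈ unitaryGroup _ ℂ :=
  Submonoid.noncommProd_mem _ _ _ _ fun J hJ => localOp_mem_unitaryGroup (hU J hJ)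

theorem ptr_productOp_conj (hU : ∀ J ∈ 𝒲, U J ∈ unitaryGroup _ ℂ) (hI : I ∈ 𝒲)
    (X : Matrix (Label d) (Label d) ℂ) :
    ptr d I (productOp d 𝒲 h𝒲 U * X * (productOp d 𝒲 h𝒲 U)ᴴ) = U I * ptr d I X * (U I)ᴴ := by
  classical
  rw [productOp, ← Finset.mul_noncommProd_erase _ hI]
  exact ptr_conj_of_commute
    (Submonoid.noncommProd_mem _ _ _ _ fun J hJ =>
      localOp_mem_unitaryGroup (hU J (Finset.mem_of_mem_erase hJ)))
    (fun C => Finset.noncommProd_commute _ _ _ _ fun J hJ =>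
      commute_localOp (h𝒲 hI (Finset.mem_of_mem_erase hJ) (Finset.ne_of_mem_erase hJ).symm) _ _)
    X

theorem exists_classical_ptr_eq_unitary_conj (h𝒲 : (𝒲 : Set (Finset (Fin n))).PairwiseDisjoint id)
    {σ : Matrix (Label d) (Label d) ℂ} (hσ : σ.PosSemidef) (hσ₁ : σ.trace = 1) :
    ∃ q ∈ stdSimplex ℝ (Label d), Maj hσ.1.eigenvalues q ∧
      ∀ I ∈ 𝒲, ∃ U ∈ unitaryGroup (LocalLabel d I) ℂ,
        ptr d I (diagonal fun x => (q x : ℂ)) = U * ptr d I σ * Uᴴ := by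
  set U : (J : Finset (Fin n)) → Matrix (LocalLabel d J) (LocalLabel d J) ℂ :=
    fun J => star ((hσ.ptr (I := J)).1.eigenvectorUnitary : Matrix _ _ ℂ)
  have hU : ∀ J ∈ 𝒲, U J ∈ unitaryGroup _ ℂ := fun J _ => Unitary.star_mem (Subtype.prop _)
  set W := productOp d 𝒲 h𝒲 U
  have hW : W ∈ unitaryGroup _ ℂ := productOp_mem_unitaryGroup hU
  set σ' := W * σ * Wᴴ
  have hσ' : σ'.PosSemidef := hσ.mul_mul_conjTranspose_same W
  have hσ'₁ : σ'.trace = 1 := by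
    rw [trace_mul_cycle, ← star_eq_conjTranspose, mem_unitaryGroup_iff'.mp hW, one_mul, hσ₁]
  refine ⟨fun x => (σ' x x).re, ⟨fun x => (Complex.nonneg_iff.mp hσ'.diag_nonneg).1, ?_⟩,
    hσ.1.maj_eigenvalues_diag_unitary_mul_mul hW, fun I hI => ⟨U I, hU I hI, ?_⟩⟩
  · rw [← Complex.re_sum]
    exact congrArg Complex.re hσ'₁
  · have hdiag : U I * ptr d I σ * (U I)ᴴ =
        diagonal (RCLike.ofReal ∘ (hσ.ptr (I := I)).1.eigenvalues) := by
      simpa [U, star_eq_conjTranspose] using (hσ.ptr (I := I)).1.star_eigenvectorUnitary_mul_mul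
    have hσ'diag : (fun x => ((σ' x x).re : ℂ)) = σ'.diag := hσ'.1.coe_re_diag
    rw [hσ'diag, ptr_diagonal_diag, ptr_productOp_conj hU hI, hdiag, diag_diagonal]

theorem posSemidef_and_trace_diagonal_of_mem_stdSimplex {q : Label d → ℝ}
    (hq : q ∈ stdSimplex ℝ _) :
    (diagonal fun x => (q x : ℂ)).PosSemidef ∧ (diagonal fun x => (q x : ℂ)).trace = 1 := by
  refine ⟨posSemidef_diagonal_iff.mpr fun x => Complex.zero_le_real.mpr (hq.1 x), ?_⟩
  rw [trace_diagonal, ← Complex.ofReal_sum, hq.2, Complex.ofReal_one]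

end PartialTrace

open PartialTrace in
theorem stmt16_general {n : ℕ} (d : Fin n → ℕ)
    (𝒲 : Finset (Finset (Fin n)))
    (hdisj : ∀ I ∈ 𝒲, ∀ J ∈ 𝒲, I ≠ J → Disjoint I J)
    (f : (I : Finset (Fin n)) →
      Matrix ((i : {i // i ∈ I}) → Fin (d i.1)) ((i : {i // i ∈ I}) → Fin (d i.1)) ℂ → ℝ)
    (hfc : ∀ I ∈ 𝒲, ContinuousOn (f I) {X | X.PosSemidef ∧ X.trace = 1})
    (hfu : ∀ I ∈ 𝒲,
      ∀ U ∈ Matrix.unitaryGroup ((i : {i // i ∈ I}) → Fin (d i.1)) ℂ,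
      ∀ X : Matrix ((i : {i // i ∈ I}) → Fin (d i.1)) ((i : {i // i ∈ I}) → Fin (d i.1)) ℂ,
        X.PosSemidef → X.trace = 1 → f I (U * X * Uᴴ) = f I X)
    (p : ((i : Fin n) → Fin (d i)) → ℝ) (hp0 : ∀ x, 0 ≤ p x) (hp1 : ∑ x, p x = 1) :
    ∃ τ : Matrix ((i : Fin n) → Fin (d i)) ((i : Fin n) → Fin (d i)) ℂ,
      ∃ hτ : τ.PosSemidef, τ.trace = 1 ∧ Maj p hτ.1.eigenvalues ∧
        (∀ x y, x ≠ y → τ x y = 0) ∧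
        ∀ σ : Matrix ((i : Fin n) → Fin (d i)) ((i : Fin n) → Fin (d i)) ℂ,
          ∀ hσ : σ.PosSemidef, σ.trace = 1 → Maj p hσ.1.eigenvalues →
            ∑ I ∈ 𝒲, f I (ptr d I σ) ≤ ∑ I ∈ 𝒲, f I (ptr d I τ) := by
  set D := {q ∈ stdSimplex ℝ (Label d) | Maj p q}
  have hD : IsCompact D := (isCompact_stdSimplex ℝ _).inter_right (isClosed_setOf_maj p)
  set g := fun q : Label d → ℝ => ∑ I ∈ 𝒲, f I (ptr d I (diagonal fun x => (q x : ℂ)))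
  have hg : ContinuousOn g D := continuousOn_finsetSum _ fun I hI =>
    (hfc I hI).comp (continuous_ptr_diagonal I).continuousOn fun q hq =>
      ⟨(posSemidef_and_trace_diagonal_of_mem_stdSimplex hq.1).1.ptr,
        (trace_ptr _).trans (posSemidef_and_trace_diagonal_of_mem_stdSimplex hq.1).2⟩
  obtain ⟨q₀, ⟨hq₀, hpq₀⟩, hmax⟩ := hD.exists_isMaxOn ⟨p, ⟨hp0, hp1⟩, Maj.refl p⟩ hg
  obtain ⟨hτ, hτ₁⟩ := posSemidef_and_trace_diagonal_of_mem_stdSimplex hq₀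
  refine ⟨_, hτ, hτ₁, hpq₀.trans (maj_eigenvalues_diagonal q₀ hτ.1),
    fun x y hxy => diagonal_apply_ne _ hxy, fun σ hσ hσ₁ hpσ => ?_⟩
  obtain ⟨q, hq, hσq, hqσ⟩ := exists_classical_ptr_eq_unitary_conj hdisj hσ hσ₁
  calc ∑ I ∈ 𝒲, f I (ptr d I σ) = g q := Finset.sum_congr rfl fun I hI => by
        obtain ⟨U, hU, hqU⟩ := hqσ I hI
        rw [hqU, hfu I hI U hU _ hσ.ptr ((trace_ptr σ).trans hσ₁)]
    _ ≤ g q₀ := hmax ⟨hq, hpσ.trans hσq⟩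

/-- "Dual" problem with a partition: maximizing `∑_{I ∈ 𝒲} f_I(τ_I)` over states with
spectrum majorized by `p`, for continuous convex unitarily invariant `f_I`, admits an
optimal point that is diagonal in the fixed product (computational) basis. -/
theorem stmt16 {n : ℕ} (d : Fin n → ℕ)
    (𝒲 : Finset (Finset (Fin n)))
    (hdisj : ∀ I ∈ 𝒲, ∀ J ∈ 𝒲, I ≠ J → Disjoint I J)
    (hcover : 𝒲.sup id = Finset.univ)
    (f : (I : Finset (Fin n)) →
      Matrix ((i : {i // i ∈ I}) → Fin (d i.1)) ((i : {i // i ∈ I}) → Fin (d i.1)) ℂ → ℝ)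
    (hfc : ∀ I ∈ 𝒲, ContinuousOn (f I) {X | X.PosSemidef ∧ X.trace = 1})
    (hfconv : ∀ I ∈ 𝒲, ConvexOn ℝ {X | X.PosSemidef ∧ X.trace = 1} (f I))
    (hfu : ∀ I ∈ 𝒲,
      ∀ U ∈ Matrix.unitaryGroup ((i : {i // i ∈ I}) → Fin (d i.1)) ℂ,
      ∀ X : Matrix ((i : {i // i ∈ I}) → Fin (d i.1)) ((i : {i // i ∈ I}) → Fin (d i.1)) ℂ,
        X.PosSemidef → X.trace = 1 → f I (U * X * Uᴴ) = f I X)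
    (p : ((i : Fin n) → Fin (d i)) → ℝ) (hp0 : ∀ x, 0 ≤ p x) (hp1 : ∑ x, p x = 1) :
    ∃ τ : Matrix ((i : Fin n) → Fin (d i)) ((i : Fin n) → Fin (d i)) ℂ,
      ∃ hτ : τ.PosSemidef, τ.trace = 1 ∧ Maj p hτ.1.eigenvalues ∧
        (∀ x y, x ≠ y → τ x y = 0) ∧
        ∀ σ : Matrix ((i : Fin n) → Fin (d i)) ((i : Fin n) → Fin (d i)) ℂ,
          ∀ hσ : σ.PosSemidef, σ.trace = 1 → Maj p hσ.1.eigenvalues →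
            ∑ I ∈ 𝒲, f I (ptr d I σ) ≤ ∑ I ∈ 𝒲, f I (ptr d I τ) :=
  stmt16_general d 𝒲 hdisj f hfc hfu p hp0 hp1
end
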